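/- arXiv:1707.09287 — 8 statements merged into one kernel-verified Lean document; each statement's English description precedes it below -/
import Mathlib

section
/- For all elements a, b, c in the positive unit ball of a C*-algebra A, the inequality ‖a - ab‖ ≤ ‖a - ac‖ + ‖c - cb‖ holds. -/
section StarModuleDerivation

variable {A : Type*} [NonUnitalNormedRing A] [StarRing A] [CStarRing A]
    [NormedSpace ℂ A] [IsScalarTower ℂ A A] [SMulCommClass ℂ A A]
    [PartialOrder A] [StarOrderedRing A]

private lemma aux_faithful (z : A) (h : ∀ y : A, z * y = 0) : z = 0 := by
  have h2 : ‖z‖ * ‖z‖ = 0 := by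
    rw [← CStarRing.norm_self_mul_star (x := z), h (star z), norm_zero]
  have := mul_self_eq_zero.mp h2
  simpa using this

private lemma aux_nat (n : ℕ) (y : A) : star ((n : ℂ) • y) = (n : ℂ) • star y := by
  rw [Nat.cast_smul_eq_nsmul, Nat.cast_smul_eq_nsmul, star_nsmul]

private lemma aux_int (n : ℤ) (y : A) : star ((n : ℂ) • y) = (n : ℂ) • star y := by
  rw [Int.cast_smul_eq_zsmul, Int.cast_smul_eq_zsmul, star_zsmul]

private lemma aux_rat (q : ℚ) (a : A) : star ((q : ℂ) • a) = (q : ℂ) • star a := by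
  have hd : (q.den : ℂ) ≠ 0 := Nat.cast_ne_zero.mpr q.den_nz
  have hkey : (q.den : ℂ) * (q : ℂ) = (q.num : ℂ) := by
    rw [Rat.cast_def]
    field_simp
  have h1 : (q.den : ℂ) • star ((q : ℂ) • a) = (q.den : ℂ) • ((q : ℂ) • star a) := by
    calc (q.den : ℂ) • star ((q : ℂ) • a)
        = star ((q.den : ℂ) • ((q : ℂ) • a)) := (aux_nat q.den _).symm
      _ = star (((q.den : ℂ) * (q : ℂ)) • a) := by rw [smul_smul]
      _ = star ((q.num : ℂ) • a) := by rw [hkey]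
      _ = (q.num : ℂ) • star a := aux_int q.num a
      _ = ((q.den : ℂ) * (q : ℂ)) • star a := by rw [hkey]
      _ = (q.den : ℂ) • ((q : ℂ) • star a) := by rw [smul_smul]
  calc star ((q : ℂ) • a) = (q.den : ℂ)⁻¹ • ((q.den : ℂ) • star ((q : ℂ) • a)) :=
        (inv_smul_smul₀ hd _).symm
    _ = (q.den : ℂ)⁻¹ • ((q.den : ℂ) • ((q : ℂ) • star a)) := by rw [h1]
    _ = (q : ℂ) • star a := inv_smul_smul₀ hd _

private lemma aux_real (r : ℝ) (a : A) : star ((r : ℂ) • a) = (r : ℂ) • star a := by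
  have hc1 : Continuous (fun r : ℝ => star ((r : ℂ) • a)) :=
    (Complex.continuous_ofReal.smul continuous_const).star
  have hc2 : Continuous (fun r : ℝ => (r : ℂ) • star a) :=
    Complex.continuous_ofReal.smul continuous_const
  have hdense : DenseRange ((↑) : ℚ → ℝ) := Rat.denseRange_cast
  have heq := hdense.equalizer hc1 hc2 (funext fun q => by
    show star ((((q : ℝ) : ℂ)) • a) = (((q : ℝ) : ℂ)) • star a
    rw [Complex.ofReal_ratCast]
    exact aux_rat q a)
  exact congrFun heq r

private def Mop (x : A) : A := star (Complex.I • star x) + Complex.I • x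

private lemma Mop_mul_left (x y : A) : Mop x * y = Mop (x * y) := by
  unfold Mop
  rw [add_mul]
  congr 1
  · calc star (Complex.I • star x) * y
        = star (star y * (Complex.I • star x)) := by rw [star_mul, star_star]
      _ = star (Complex.I • (star y * star x)) := by rw [mul_smul_comm]
      _ = star (Complex.I • star (x * y)) := by rw [← star_mul]
  · exact smul_mul_assoc _ _ _

private lemma Mop_mul_right (x y : A) : x * Mop y = Mop (x * y) := by
  unfold Mop
  rw [mul_add]
  congr 1
  · calc x * star (Complex.I • star y)
        = star ((Complex.I • star y) * star x) := by rw [star_mul, star_star]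
      _ = star (Complex.I • (star y * star x)) := by rw [smul_mul_assoc]
      _ = star (Complex.I • star (x * y)) := by rw [← star_mul]
  · exact (mul_smul_comm _ _ _)

private lemma Mop_star (x : A) : star (Mop x) = Mop (star x) := by
  simp only [Mop, star_add, star_star]
  exact add_comm _ _

private lemma Mop_neg (x : A) : Mop (-x) = -Mop x := by
  simp only [Mop, smul_neg, star_neg, neg_add]

private lemma Mop_add (x y : A) : Mop (x + y) = Mop x + Mop y := by
  simp only [Mop, star_add, smul_add]
  abel

private lemma Mop_I_smul (x : A) : Mop (Complex.I • x) = Complex.I • Mop x := by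
  have h : ∀ y : A, (Mop (Complex.I • x) - Complex.I • Mop x) * y = 0 := by
    intro y
    have e1 : Mop (Complex.I • x) * y = Complex.I • (x * Mop y) := by
      rw [Mop_mul_left, ← Mop_mul_right, smul_mul_assoc]
    have e2 : (Complex.I • Mop x) * y = Complex.I • (x * Mop y) := by
      rw [smul_mul_assoc, Mop_mul_left, ← Mop_mul_right]
    rw [sub_mul, e1, e2, sub_self]
  exact sub_eq_zero.mp (aux_faithful _ h)

private lemma Mop_id (y : A) : star (Complex.I • star y) = Mop y - Complex.I • y := by
  simp [Mop]

/-- Main quantitative step: if `m = Mop x`, `Mop m = I•m + I•m`, `star m = ±m` and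
`x*m` is selfadjoint, then `m = 0`. -/
private lemma Mop_zero_aux (x m : A) (hm : m = Mop x)
    (hMopm : Mop m = Complex.I • m + Complex.I • m)
    (hstarm : star m = m ∨ star m = -m)
    (hw : star (x * m) = x * m) : m = 0 := by
  have hsq : m * m = Complex.I • (x * m) + Complex.I • (x * m) := by
    calc m * m = Mop x * m := by rw [← hm]
      _ = Mop (x * m) := Mop_mul_left x m
      _ = x * Mop m := (Mop_mul_right x m).symm
      _ = x * (Complex.I • m + Complex.I • m) := by rw [hMopm]
      _ = Complex.I • (x * m) + Complex.I • (x * m) := by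
          rw [mul_add, mul_smul_comm]
  have hIw : (Complex.I • (x * m)) * (Complex.I • (x * m)) = -((x * m) * (x * m)) := by
    rw [smul_mul_smul_comm, Complex.I_mul_I, neg_one_smul]
  have h4 : (m * m) * (m * m) =
      -(((x*m)*(x*m)) + ((x*m)*(x*m)) + ((x*m)*(x*m)) + ((x*m)*(x*m))) := by
    rw [hsq, add_mul, mul_add, hIw]
    abel
  have hstarmm : star (m * m) = m * m := by
    rcases hstarm with h | h
    · rw [star_mul, h]
    · rw [star_mul, h, neg_mul_neg]
  have hw0 : (0 : A) ≤ (x * m) * (x * m) := by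
    have := star_mul_self_nonneg (x * m)
    rwa [hw] at this
  have h4n : (0 : A) ≤ (m * m) * (m * m) := by
    have := star_mul_self_nonneg (m * m)
    rwa [hstarmm] at this
  have h4p : (m * m) * (m * m) ≤ 0 := by
    rw [h4]
    exact neg_nonpos.mpr (add_nonneg (add_nonneg (add_nonneg hw0 hw0) hw0) hw0)
  have hz : (m * m) * (m * m) = 0 := le_antisymm h4p h4n
  have hmm0 : ‖m * m‖ * ‖m * m‖ = 0 := by
    rw [← CStarRing.norm_star_mul_self (x := m * m), hstarmm, hz, norm_zero]
  have hmm : m * m = 0 := by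
    have := mul_self_eq_zero.mp hmm0
    simpa using this
  have hnm : ‖m‖ * ‖m‖ = 0 := by
    rcases hstarm with h | h
    · rw [← CStarRing.norm_star_mul_self (x := m), h, hmm, norm_zero]
    · rw [← CStarRing.norm_star_mul_self (x := m), h, neg_mul, hmm, neg_zero, norm_zero]
  have := mul_self_eq_zero.mp hnm
  simpa using this

private lemma Mop_eq_zero_of (x : A) (hx : star x = x ∨ star x = -x) : Mop x = 0 := by
  set m := Mop x with hm
  have hgen : star (Complex.I • star (Complex.I • x)) = Complex.I • m + x := by
    rw [Mop_id (Complex.I • x), Mop_I_smul, ← hm, smul_smul, Complex.I_mul_I, neg_one_smul,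
      sub_neg_eq_add]
  have hII : star (Complex.I • (Complex.I • x)) = -(star x) := by
    rw [smul_smul, Complex.I_mul_I, neg_one_smul, star_neg]
  have hcomm : m * x = x * m := by
    rw [hm, Mop_mul_left, ← Mop_mul_right]
  rcases hx with h | h
  · -- selfadjoint case
    have hsm : star m = m := by rw [hm, Mop_star, h]
    have hm_eq : m = star (Complex.I • x) + Complex.I • x := by
      rw [hm]; unfold Mop; rw [h]
    have hIm : star (Complex.I • m) = Complex.I • m := by
      calc star (Complex.I • m)
          = star (Complex.I • star (Complex.I • x)) + star (Complex.I • (Complex.I • x)) := by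
            rw [hm_eq, smul_add, star_add]
        _ = (Complex.I • m + x) + -(star x) := by rw [hgen, hII]
        _ = Complex.I • m := by rw [h]; abel
    have hMopm : Mop m = Complex.I • m + Complex.I • m := by
      unfold Mop
      rw [hsm, hIm]
    have hw : star (x * m) = x * m := by
      rw [star_mul, hsm, h, hcomm]
    exact Mop_zero_aux x m hm hMopm (Or.inl hsm) hw
  · -- skew case
    have hsm : star m = -m := by rw [hm, Mop_star, h, Mop_neg]
    have hm_eq : m = -star (Complex.I • x) + Complex.I • x := by
      rw [hm]; unfold Mop; rw [h, smul_neg, star_neg]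
    have hIm : star (Complex.I • m) = -(Complex.I • m) := by
      calc star (Complex.I • m)
          = -star (Complex.I • star (Complex.I • x)) + star (Complex.I • (Complex.I • x)) := by
            rw [hm_eq, smul_add, smul_neg, star_add, star_neg]
        _ = -(Complex.I • m + x) + -(star x) := by rw [hgen, hII]
        _ = -(Complex.I • m) := by rw [h]; abel
    have hMopm : Mop m = Complex.I • m + Complex.I • m := by
      unfold Mop
      rw [hsm, smul_neg, star_neg, hIm, neg_neg]
    have hw : star (x * m) = x * m := by
      rw [star_mul, hsm, h, neg_mul_neg, hcomm]
    exact Mop_zero_aux x m hm hMopm (Or.inr hsm) hw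

private lemma Mop_eq_zero (x : A) : Mop x = 0 := by
  have hhalf : ((2⁻¹ : ℝ) : ℂ) = (2⁻¹ : ℂ) := by norm_num
  have h1 : star ((2⁻¹ : ℂ) • (x + star x)) = (2⁻¹ : ℂ) • (x + star x) := by
    rw [← hhalf, aux_real, star_add, star_star, add_comm]
  have h2 : star ((2⁻¹ : ℂ) • (x - star x)) = -((2⁻¹ : ℂ) • (x - star x)) := by
    rw [← hhalf, aux_real, star_sub, star_star, ← smul_neg, neg_sub]
  have hx : x = (2⁻¹ : ℂ) • (x + star x) + (2⁻¹ : ℂ) • (x - star x) := by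
    module
  rw [hx, Mop_add, Mop_eq_zero_of _ (Or.inl h1), Mop_eq_zero_of _ (Or.inr h2), add_zero]

private lemma aux_star_smul (c : ℂ) (a : A) : star (c • a) = star c • star a := by
  have hI : ∀ y : A, star (Complex.I • y) = -(Complex.I • star y) := by
    intro y
    have h0 := Mop_eq_zero (A := A) (star y)
    unfold Mop at h0
    rw [star_star] at h0
    exact eq_neg_of_add_eq_zero_left h0
  have hconj : star c = (c.re : ℂ) - (c.im : ℂ) * Complex.I := by
    apply Complex.ext <;> simp
  calc star (c • a)
      = star ((c.re : ℂ) • a + (c.im : ℂ) • (Complex.I • a)) := by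
        conv_lhs => rw [← Complex.re_add_im c, add_smul, mul_smul]
    _ = (c.re : ℂ) • star a + (c.im : ℂ) • star (Complex.I • a) := by
        rw [star_add, aux_real, aux_real]
    _ = (c.re : ℂ) • star a - (c.im : ℂ) • (Complex.I • star a) := by
        rw [hI, smul_neg, ← sub_eq_add_neg]
    _ = star c • star a := by rw [hconj, sub_smul, mul_smul]

end StarModuleDerivation

/-- For all elements `a, b, c` in the positive unit ball of a C*-algebra `A`,
`‖a - a*b‖ ≤ ‖a - a*c‖ + ‖c - c*b‖`. -/
theorem stmt_0 {A : Type*} [NonUnitalNormedRing A] [StarRing A] [CStarRing A]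
    [NormedSpace ℂ A] [IsScalarTower ℂ A A] [SMulCommClass ℂ A A]
    [PartialOrder A] [StarOrderedRing A] [CompleteSpace A]
    (a b c : A) (ha : 0 ≤ a) (hna : ‖a‖ ≤ 1) (hb : 0 ≤ b) (hnb : ‖b‖ ≤ 1)
    (hc : 0 ≤ c) (hnc : ‖c‖ ≤ 1) :
    ‖a - a * b‖ ≤ ‖a - a * c‖ + ‖c - c * b‖ := by
  letI : StarModule ℂ A := ⟨fun r x => aux_star_smul r x⟩
  letI : NonUnitalCStarAlgebra A := { }
  have honesub : ‖(1 : Unitization ℂ A) - (b : Unitization ℂ A)‖ ≤ 1 := by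
    have hb' : (0 : Unitization ℂ A) ≤ (b : Unitization ℂ A) := by
      rwa [Unitization.inr_nonneg_iff]
    have hb1 : (b : Unitization ℂ A) ≤ 1 := by
      rw [← CStarAlgebra.norm_le_one_iff_of_nonneg _ hb', Unitization.norm_inr]
      exact hnb
    have h0 : (0 : Unitization ℂ A) ≤ 1 - (b : Unitization ℂ A) := by rwa [sub_nonneg]
    rw [CStarAlgebra.norm_le_one_iff_of_nonneg _ h0]
    simpa using hb'
  rw [← Unitization.norm_inr (𝕜 := ℂ) (a - a * b)]
  have key : ((a - a * b : A) : Unitization ℂ A)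
      = ((a - a * c : A) : Unitization ℂ A) * (1 - (b : Unitization ℂ A))
        + ((a : A) : Unitization ℂ A) * ((c - c * b : A) : Unitization ℂ A) := by
    simp only [Unitization.inr_sub, Unitization.inr_mul]
    noncomm_ring
  rw [key]
  calc ‖((a - a * c : A) : Unitization ℂ A) * (1 - (b : Unitization ℂ A))
        + ((a : A) : Unitization ℂ A) * ((c - c * b : A) : Unitization ℂ A)‖
      ≤ ‖((a - a * c : A) : Unitization ℂ A)‖ * ‖(1 - (b : Unitization ℂ A))‖
        + ‖((a : A) : Unitization ℂ A)‖ * ‖((c - c * b : A) : Unitization ℂ A)‖ :=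
        (norm_add_le _ _).trans (by gcongr <;> exact norm_mul_le _ _)
    _ ≤ ‖((a - a * c : A) : Unitization ℂ A)‖ * 1
        + 1 * ‖((c - c * b : A) : Unitization ℂ A)‖ := by
        gcongr
        rwa [Unitization.norm_inr]

    _ = ‖a - a * c‖ + ‖c - c * b‖ := by
        simp only [mul_one, one_mul, Unitization.norm_inr]
end

section
/- Every ≪-approximately cofinal subset of the positive unit ball of a C*-algebra is ≪-approximately directed: if U ⊆ A¹₊ is such that for every b ∈ A¹₊ and ε > 0 there is u ∈ U with ‖b - bu‖ < ε, then for all a, b ∈ U and ε > 0 there is u ∈ U with ‖a - au‖ < ε and ‖b - bu‖ < ε. -/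
/-!
The hypotheses force the involution to be conjugate-linear, so `A` is a non-unital
C⋆-algebra: for `0 ≤ w` the element `I • star (I • w)` is again positive, has the same square as
`w` and commutes with it, hence equals `w`; multiplying by positive elements then shows
`star (I • a) = -(I • star a)` for every `a`.

Given `a, b ∈ U`, put `s = star a * a + star b * b`. In the unitization, with `e = 1 - u`,
`‖a - a u‖² = ‖e (star a * a) e‖ ≤ ‖e s e‖ ≤ ‖s - s u‖`, so an element `u ∈ U` with
`‖s / 2 - (s / 2) u‖ < ε² / 2` works for `a` and `b` simultaneously.
-/

open Complex

section
variable {A : Type*} [NonUnitalNormedRing A] [StarRing A] [CStarRing A]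

theorem CStarRing.eq_zero_of_mul_star_mul_eq_zero {x : A} (h : x * star x * x = 0) : x = 0 := by
  have hsq : star (star x * x) * (star x * x) = 0 := by
    rw [star_mul, star_star, mul_assoc, ← mul_assoc x, h, mul_zero]
  rwa [CStarRing.star_mul_self_eq_zero_iff, CStarRing.star_mul_self_eq_zero_iff] at hsq

variable [PartialOrder A] [StarOrderedRing A]

theorem eq_of_nonneg_of_mul_self_eq_of_commute {u w : A} (hu : 0 ≤ u) (hw : 0 ≤ w)
    (hsq : u * u = w * w) (hcomm : u * w = w * u) : u = w := by
  set d := u - w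
  have hd : IsSelfAdjoint d := (IsSelfAdjoint.of_nonneg hu).sub (IsSelfAdjoint.of_nonneg hw)
  have hdu : 0 ≤ d * u * d := by simpa [hd.star_eq] using star_left_conjugate_nonneg hu d
  have hdw : 0 ≤ d * w * d := by simpa [hd.star_eq] using star_left_conjugate_nonneg hw d
  have hsum : d * u * d + d * w * d = 0 := by
    have : d * (u + w) = 0 := by
      simp only [d, sub_mul, mul_add, hsq, hcomm]; abel
    rw [← add_mul, ← mul_add, this, zero_mul]
  obtain ⟨hdu0, hdw0⟩ := (add_eq_zero_iff_of_nonneg hdu hdw).mp hsum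
  have hd3 : d * star d * d = 0 := by
    rw [hd.star_eq, show d * d = d * u - d * w by simp only [d, mul_sub], sub_mul, hdu0, hdw0,
      sub_zero]
  exact sub_eq_zero.mp (CStarRing.eq_zero_of_mul_star_mul_eq_zero hd3)
end

theorem star_real_smul {E : Type*} [AddCommGroup E] [Module ℝ E] [TopologicalSpace E]
    [ContinuousSMul ℝ E] [T2Space E] [StarAddMonoid E] [ContinuousStar E] (r : ℝ) (x : E) :
    star (r • x) = r • star x :=
  map_real_smul (starAddEquiv (R := E)) continuous_star r x

theorem I_smul_star_I_smul_involutive {E : Type*} [AddCommGroup E] [StarAddMonoid E]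
    [Module ℂ E] (a : E) : I • star (I • (I • star (I • a))) = a := by
  rw [smul_smul, I_mul_I, neg_one_smul, star_neg, star_star, smul_neg, smul_smul, I_mul_I,
    neg_one_smul, neg_neg]

section
variable {A : Type*} [NonUnitalRing A] [StarRing A] [Module ℂ A] [SMulCommClass ℂ A A]

theorem I_smul_star_I_smul_mul [IsScalarTower ℂ A A] (a b : A) :
    I • star (I • a) * (I • star (I • b)) = star a * star b := by
  rw [smul_mul_smul_comm, ← star_mul, smul_mul_smul_comm, I_mul_I, neg_one_smul, neg_one_smul,
    star_neg, neg_neg, star_mul]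

theorem I_smul_star_I_smul_nonneg [PartialOrder A] [StarOrderedRing A] {w : A} (hw : 0 ≤ w) :
    0 ≤ I • star (I • w) := by
  rw [StarOrderedRing.nonneg_iff] at hw
  induction hw using AddSubmonoid.closure_induction with
  | mem _ hz =>
    obtain ⟨s, rfl⟩ := hz
    rw [← mul_smul_comm, star_mul, star_star, ← mul_smul_comm]
    exact star_mul_self_nonneg _
  | zero => simp
  | add x y _ _ hx hy =>
    rw [smul_add, star_add, smul_add]
    exact add_nonneg hx hy
end

section
variable {A : Type*} [NonUnitalNormedRing A] [StarRing A] [CStarRing A] [PartialOrder A]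
  [StarOrderedRing A] [Module ℂ A] [IsScalarTower ℂ A A] [SMulCommClass ℂ A A]

theorem star_I_smul_of_nonneg {w : A} (hw : 0 ≤ w) : star (I • w) = -(I • w) := by
  set u := I • star (I • w) with hu_def
  have hw' : star w = w := (IsSelfAdjoint.of_nonneg hw).star_eq
  have hu : 0 ≤ u := I_smul_star_I_smul_nonneg hw
  have hu' : star u = u := (IsSelfAdjoint.of_nonneg hu).star_eq
  have hsq : u * u = w * w := by rw [hu_def, I_smul_star_I_smul_mul, hw']
  have hcomm : u * w = w * u := by
    conv_lhs => rw [← I_smul_star_I_smul_involutive w, ← hu_def, I_smul_star_I_smul_mul]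
    rw [hw', hu']
  have huw : u = w := eq_of_nonneg_of_mul_self_eq_of_commute hu hw hsq hcomm
  calc star (I • w) = -(I • u) := by rw [hu_def, smul_smul, I_mul_I, neg_one_smul, neg_neg]
    _ = -(I • w) := by rw [huw]

theorem star_I_smul (a : A) : star (I • a) = -(I • star a) := by
  set x := star (I • a) + I • star a
  have hx : ∀ b : A, 0 ≤ b → b * x = 0 := by
    intro b hb
    have hb' : star b = b := (IsSelfAdjoint.of_nonneg hb).star_eq
    have : b * star (I • a) = -(b * (I • star a)) := by
      rw [← hb', ← star_mul, smul_mul_assoc, ← mul_smul_comm, star_mul, hb',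
        star_I_smul_of_nonneg hb, neg_mul, smul_mul_assoc, mul_smul_comm]
    rw [mul_add, this, neg_add_cancel]
  have hx0 : x = 0 := CStarRing.eq_zero_of_mul_star_mul_eq_zero (hx _ (mul_star_self_nonneg x))
  exact eq_neg_of_add_eq_zero_left hx0
end

theorem CStarRing.starModule_of_starOrderedRing {A : Type*} [NonUnitalNormedRing A] [StarRing A]
    [CStarRing A] [PartialOrder A] [StarOrderedRing A] [NormedSpace ℂ A] [IsScalarTower ℂ A A]
    [SMulCommClass ℂ A A] : StarModule ℂ A where
  star_smul z x := by
    have hre : ∀ (r : ℝ) (y : A), star ((r : ℂ) • y) = (r : ℂ) • star y := by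
      intro r y
      rw [Complex.coe_smul, Complex.coe_smul, star_real_smul]
    conv_lhs => rw [← re_add_im z, add_smul, ← smul_smul]
    rw [star_add, hre, hre, star_I_smul, smul_neg, smul_smul, ← sub_eq_add_neg, ← sub_smul]
    congr 1
    apply Complex.ext <;> simp

section
variable {A : Type*} [NonUnitalCStarAlgebra A] [PartialOrder A] [StarOrderedRing A]

theorem norm_mul_sq_le_norm_mul_of_star_mul_self_le {x s e : A} (hxs : star x * x ≤ s)
    (he : 0 ≤ e) (he1 : ‖e‖ ≤ 1) : ‖x * e‖ ^ 2 ≤ ‖s * e‖ := by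
  have he' : star e = e := (IsSelfAdjoint.of_nonneg he).star_eq
  have hs : star s = s := (IsSelfAdjoint.of_nonneg ((star_mul_self_nonneg x).trans hxs)).star_eq
  calc ‖x * e‖ ^ 2 = ‖e * (star x * x) * e‖ := by
        rw [sq, ← CStarRing.norm_star_mul_self, star_mul, he', mul_assoc, mul_assoc, mul_assoc]
    _ ≤ ‖e * s * e‖ := by
        refine CStarAlgebra.norm_le_norm_of_nonneg_of_le ?_ ?_
        · simpa [he'] using star_left_conjugate_nonneg (star_mul_self_nonneg x) e
        · simpa [he'] using star_left_conjugate_le_conjugate hxs e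
    _ ≤ ‖e * s‖ * ‖e‖ := norm_mul_le _ _
    _ ≤ ‖e * s‖ := mul_le_of_le_one_right (norm_nonneg _) he1
    _ = ‖s * e‖ := by rw [← norm_star, star_mul, he', hs]

open Unitization CStarAlgebra in
theorem norm_sub_mul_sq_le_norm_sub_mul_of_star_mul_self_le {x s u : A} (hxs : star x * x ≤ s)
    (hu : 0 ≤ u) (hu1 : ‖u‖ ≤ 1) : ‖x - x * u‖ ^ 2 ≤ ‖s - s * u‖ := by
  have hu' : (u : A⁺¹) ∈ Set.Icc 0 1 := inr_mem_Icc_iff_norm_le.mpr ⟨hu, hu1⟩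
  have he : (1 - u : A⁺¹) ∈ Set.Icc 0 1 := ⟨sub_nonneg.mpr hu'.2, sub_le_self _ hu'.1⟩
  have hs : 0 ≤ s := (star_mul_self_nonneg x).trans hxs
  have hxs' : star (x : A⁺¹) * x ≤ s := by
    rw [← inr_star, ← inr_mul, inr_le_iff _ _ (.star_mul_self x) (.of_nonneg hs)]
    exact hxs
  have := norm_mul_sq_le_norm_mul_of_star_mul_self_le hxs' he.1
    (mem_Icc_iff_norm_le_one.mp he).2
  rwa [mul_sub, mul_sub, mul_one, mul_one, ← inr_mul, ← inr_mul, ← inr_sub, ← inr_sub, norm_inr,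
    norm_inr] at this
end

/-- Every `≪`-approximately cofinal subset of the positive unit ball of a C*-algebra is
`≪`-approximately directed. -/
theorem stmt_2 {A : Type*} [NonUnitalNormedRing A] [StarRing A] [CStarRing A]
    [NormedSpace ℂ A] [IsScalarTower ℂ A A] [SMulCommClass ℂ A A]
    [PartialOrder A] [StarOrderedRing A] [CompleteSpace A]
    (U : Set A) (hU : U ⊆ {x | 0 ≤ x ∧ ‖x‖ ≤ 1})
    (hcof : ∀ b : A, 0 ≤ b → ‖b‖ ≤ 1 → ∀ ε : ℝ, 0 < ε → ∃ u ∈ U, ‖b - b * u‖ < ε) :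
    ∀ a ∈ U, ∀ b ∈ U, ∀ ε : ℝ, 0 < ε → ∃ u ∈ U, ‖a - a * u‖ < ε ∧ ‖b - b * u‖ < ε := by
  have : StarModule ℂ A := CStarRing.starModule_of_starOrderedRing
  let : NonUnitalCStarAlgebra A := {}
  intro a haU b hbU ε hε
  obtain ⟨-, ha1⟩ := hU haU
  obtain ⟨-, hb1⟩ := hU hbU
  set s := star a * a + star b * b
  have hs : 0 ≤ s := add_nonneg (star_mul_self_nonneg a) (star_mul_self_nonneg b)
  have hs2 : ‖s‖ ≤ 2 := by
    calc ‖s‖ ≤ ‖a‖ * ‖a‖ + ‖b‖ * ‖b‖ := by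
          simpa only [CStarRing.norm_star_mul_self] using norm_add_le (star a * a) (star b * b)
      _ ≤ 1 * 1 + 1 * 1 := by gcongr
      _ = 2 := by norm_num
  obtain ⟨u, huU, hu⟩ := hcof ((2⁻¹ : ℝ) • s) (smul_nonneg (by norm_num) hs)
    (by rw [norm_smul]; norm_num; linarith) (ε ^ 2 / 2) (by positivity)
  obtain ⟨hu0, hu1⟩ := hU huU
  have hsu : ‖s - s * u‖ < ε ^ 2 := by
    rw [smul_mul_assoc, ← smul_sub, norm_smul] at hu
    norm_num at hu
    linarith
  have key {x : A} (hx : star x * x ≤ s) : ‖x - x * u‖ < ε :=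
    lt_of_pow_lt_pow_left₀ 2 hε.le
      ((norm_sub_mul_sq_le_norm_sub_mul_of_star_mul_self_le hx hu0 hu1).trans_lt hsu)
  exact ⟨u, huU, key (le_add_of_nonneg_right (star_mul_self_nonneg b)),
    key (le_add_of_nonneg_left (star_mul_self_nonneg a))⟩
end

section
/- Let D be the C*-algebra of bounded sequences (aₙ) in M₂(ℂ) such that (aₙ) converges in norm to a scalar multiple of the rank-one projection P₀ onto ℂ·(0,1). Let p be the constant sequence pₙ = P₀ and q the sequence qₙ = P_{1/n} where P_θ is the rank-one projection onto ℂ·(sin θ, cos θ). Then there is no positive element a of D of norm at most 1 with p = pa and q = qa. -/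
open Filter
open scoped ComplexOrder

/-- The rank-one projection `P_θ` onto `ℂ·(sin θ, cos θ)`. -/
noncomputable def Pmat (θ : ℝ) : Matrix (Fin 2) (Fin 2) ℂ :=
  !![((Real.sin θ : ℂ)) ^ 2, (Real.sin θ : ℂ) * (Real.cos θ : ℂ);
     (Real.sin θ : ℂ) * (Real.cos θ : ℂ), ((Real.cos θ : ℂ)) ^ 2]

lemma aux_eq_one {θ : ℝ} (hθ : Real.sin θ ≠ 0) (a : Matrix (Fin 2) (Fin 2) ℂ)
    (ha : a.IsHermitian) (h0 : Pmat 0 * a = Pmat 0) (h1 : Pmat θ * a = Pmat θ) :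
    a = 1 := by
  have e10 := congrFun (congrFun h0 1) 0
  have e11 := congrFun (congrFun h0 1) 1
  simp [Pmat, Matrix.mul_apply, Fin.sum_univ_two] at e10 e11
  have e01 : a 0 1 = 0 := by
    have := congrFun (congrFun ha.symm 0) 1
    simp [Matrix.conjTranspose_apply, e10] at this
    simpa using this
  have e00 := congrFun (congrFun h1 0) 0
  simp [Pmat, Matrix.mul_apply, Fin.sum_univ_two, e10] at e00
  have hs : Complex.sin (θ : ℂ) ≠ 0 := by
    rw [← Complex.ofReal_sin]; exact_mod_cast hθ
  have e00' : a 0 0 = 1 := by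
    exact mul_left_cancel₀ (pow_ne_zero 2 hs)
      (e00.trans (mul_one (Complex.sin (θ : ℂ) ^ 2)).symm)
  ext i j
  fin_cases i <;> fin_cases j <;> simp [e00', e01, e10, e11, Matrix.one_apply]

/-- In the C*-algebra `D` of bounded `M₂(ℂ)`-sequences converging to a scalar multiple of
`P₀`, there is no positive element `a` of norm at most `1` with `p = p*a` and `q = q*a`,
where `pₙ = P₀` and `qₙ = P_{1/n}`. -/
theorem stmt_4 :
    ¬ ∃ a : ℕ → Matrix (Fin 2) (Fin 2) ℂ,
      (∀ n, (a n).PosSemidef) ∧ (∀ n, (1 - a n).PosSemidef) ∧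
      (∃ z : ℂ, Tendsto a atTop (nhds (z • Pmat 0))) ∧
      (∀ n, Pmat 0 * a n = Pmat 0) ∧
      (∀ n : ℕ, Pmat (1 / ((n : ℝ) + 1)) * a n = Pmat (1 / ((n : ℝ) + 1))) := by
  rintro ⟨a, hpsd, -, ⟨z, hz⟩, hp, hq⟩
  have hone : ∀ n, a n = 1 := by
    intro n
    have hθ : Real.sin (1 / ((n : ℝ) + 1)) ≠ 0 := by
      have h1 : (0 : ℝ) < 1 / ((n : ℝ) + 1) := by positivity
      have h2 : 1 / ((n : ℝ) + 1) < Real.pi := by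
        have : 1 / ((n : ℝ) + 1) ≤ 1 := by
          rw [div_le_one (by positivity)]; linarith [Nat.cast_nonneg (α := ℝ) n]
        linarith [Real.pi_gt_three]
      exact ne_of_gt (Real.sin_pos_of_pos_of_lt_pi h1 h2)
    exact aux_eq_one hθ (a n) (hpsd n).1 (hp n) (hq n)
  have hz' : Tendsto a atTop (nhds (1 : Matrix (Fin 2) (Fin 2) ℂ)) := by
    have : a = fun _ => (1 : Matrix (Fin 2) (Fin 2) ℂ) := funext hone
    rw [this]; exact tendsto_const_nhds
  have heq : z • Pmat 0 = (1 : Matrix (Fin 2) (Fin 2) ℂ) := tendsto_nhds_unique hz hz'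
  have := congrFun (congrFun heq 0) 0
  simp [Pmat, Matrix.one_apply] at this
end

section
/- Every well-generated Boolean algebra is superatomic: if a Boolean algebra A is generated by a subset G that is closed under pairwise meets and has no infinite strictly decreasing chains, then every nonzero quotient of A (equivalently, every homomorphic image with more than one element) contains an atom. -/
/-- Membership in the Boolean subalgebra generated by a set `G`: the elements reachable
from `G` by the Boolean operations. -/
inductive BoolGen {A : Type*} [BooleanAlgebra A] (G : Set A) : A → Prop
  | base {a : A} : a ∈ G → BoolGen G a
  | bot : BoolGen G ⊥
  | top : BoolGen G ⊤
  | sup {a b : A} : BoolGen G a → BoolGen G b → BoolGen G (a ⊔ b)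
  | inf {a b : A} : BoolGen G a → BoolGen G b → BoolGen G (a ⊓ b)
  | compl {a : A} : BoolGen G a → BoolGen G aᶜ

section Aux

variable {A B : Type*} [BooleanAlgebra A] [BooleanAlgebra B]

/-- Normal forms relative to a generating set: finite sups of "differences"
`h ⊓ (sup H)ᶜ` with `h ∈ G` and `H` a finite subset of `G`. -/
inductive NF (G : Set A) : A → Prop
  | bot : NF G ⊥
  | diff {h : A} {H : Finset A} : h ∈ G → ↑H ⊆ G → NF G (h ⊓ (H.sup id)ᶜ)
  | sup {a b : A} : NF G a → NF G b → NF G (a ⊔ b)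

lemma nf_of_mem {G : Set A} {a : A} (ha : a ∈ G) : NF G a := by
  have h : a ⊓ ((∅ : Finset A).sup id)ᶜ = a := by simp
  have := NF.diff (G := G) (H := (∅ : Finset A)) ha (by simp)
  rwa [h] at this

lemma nf_finsetSup {G : Set A} (htop : (⊤ : A) ∈ G) {H : Finset A} (hH : ↑H ⊆ G) :
    NF G (H.sup id) := by
  classical
  induction H using Finset.induction_on with
  | empty => simpa using NF.bot
  | @insert a s _ ih =>
    rw [Finset.sup_insert]
    exact NF.sup (nf_of_mem (hH (by simp))) (ih fun x hx => hH (by simp [hx]))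

lemma nf_diff_inf {G : Set A} (hmeet : ∀ a ∈ G, ∀ b ∈ G, a ⊓ b ∈ G)
    {h : A} {H : Finset A} (hh : h ∈ G) (hH : ↑H ⊆ G) {b : A} (hb : NF G b) :
    NF G ((h ⊓ (H.sup id)ᶜ) ⊓ b) := by
  classical
  induction hb with
  | bot => rw [inf_bot_eq]; exact NF.bot
  | diff hh2 hH2 =>
    rename_i h2 H2
    have e : (h ⊓ (H.sup id)ᶜ) ⊓ (h2 ⊓ (H2.sup id)ᶜ)
        = (h ⊓ h2) ⊓ (((H ∪ H2).sup id))ᶜ := by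
      rw [Finset.sup_union, compl_sup]
      ac_rfl
    rw [e]
    exact NF.diff (hmeet _ hh _ hh2) (by
      intro x hx
      rcases Finset.mem_union.mp (by exact_mod_cast hx) with h' | h'
      · exact hH h'
      · exact hH2 h')
  | sup _ _ ih1 ih2 =>
    rw [inf_sup_left]
    exact NF.sup ih1 ih2

lemma nf_inf {G : Set A} (hmeet : ∀ a ∈ G, ∀ b ∈ G, a ⊓ b ∈ G)
    {a b : A} (ha : NF G a) (hb : NF G b) : NF G (a ⊓ b) := by
  induction ha with
  | bot => rw [bot_inf_eq]; exact NF.bot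
  | diff hh hH => exact nf_diff_inf hmeet hh hH hb
  | sup _ _ ih1 ih2 => rw [inf_sup_right]; exact NF.sup ih1 ih2

lemma nf_compl {G : Set A} (htop : (⊤ : A) ∈ G)
    (hmeet : ∀ a ∈ G, ∀ b ∈ G, a ⊓ b ∈ G) {a : A} (ha : NF G a) : NF G aᶜ := by
  induction ha with
  | bot => rw [compl_bot]; exact nf_of_mem htop
  | diff hh hH =>
    rename_i h H
    rw [compl_inf, compl_compl]
    have h1 : NF G hᶜ := by
      have e : (⊤ : A) ⊓ (({h} : Finset A).sup id)ᶜ = hᶜ := by simp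
      have := NF.diff (G := G) (H := ({h} : Finset A)) htop (by simpa using hh)
      rwa [e] at this
    exact NF.sup h1 (nf_finsetSup htop hH)
  | sup _ _ ih1 ih2 =>
    rw [compl_sup]
    exact nf_inf hmeet ih1 ih2

lemma nf_all {G : Set A} (htop : (⊤ : A) ∈ G)
    (hmeet : ∀ a ∈ G, ∀ b ∈ G, a ⊓ b ∈ G)
    (hgen : ∀ a : A, BoolGen G a) (hG : ∀ a ∈ G, NF G a) (a : A) : NF G a := by
  have h := hgen a
  induction h with
  | base h => exact hG _ h
  | bot => exact NF.bot
  | top => exact nf_of_mem htop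
  | sup _ _ ih1 ih2 => exact NF.sup ih1 ih2
  | inf _ _ ih1 ih2 => exact nf_inf hmeet ih1 ih2
  | compl _ ih => exact nf_compl htop hmeet ih

lemma sup_map_bot (f : BoundedLatticeHom A B) {s : Finset A} {t : A → A}
    (h : ∀ k ∈ s, f (t k) = ⊥) : f (s.sup t) = ⊥ := by
  classical
  induction s using Finset.induction_on with
  | empty => simpa using map_bot f
  | @insert a s _ ih =>
    rw [Finset.sup_insert, map_sup, h a (by simp), bot_sup_eq]
    exact ih fun k hk => h k (by simp [hk])

lemma key {G : Set A} (htop : (⊤ : A) ∈ G)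
    (hmeet : ∀ a ∈ G, ∀ b ∈ G, a ⊓ b ∈ G)
    (hwf : Set.WellFoundedOn G (· < ·))
    (f : BoundedLatticeHom A B) (hf : Function.Surjective f)
    (hnf : ∀ a : A, NF G a) :
    ∀ g ∈ G, ∀ H : Finset A, ↑H ⊆ G → f (g ⊓ (H.sup id)ᶜ) ≠ ⊥ →
      ∃ b : B, IsAtom b := by
  classical
  intro g hg
  refine Set.WellFoundedOn.induction (P := fun g => ∀ H : Finset A, ↑H ⊆ G → f (g ⊓ (H.sup id)ᶜ) ≠ ⊥ → ∃ b : B, IsAtom b) hwf hg ?_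
  clear hg g
  intro g hg ih H hH hne
  by_cases hcase : ∃ h ∈ G, ∃ H' : Finset A, ↑H' ⊆ G ∧ ¬ g ≤ h ∧
      f ((g ⊓ h) ⊓ (((H ∪ H').sup id))ᶜ) ≠ ⊥
  · obtain ⟨h, hh, H', hH', hgh, hne'⟩ := hcase
    have hlt : g ⊓ h < g := lt_of_le_of_ne inf_le_left (fun e => hgh (inf_eq_left.mp e))
    refine ih (g ⊓ h) (hmeet _ hg _ hh) hlt (H ∪ H') ?_ hne'
    intro x hx
    rcases Finset.mem_union.mp (by exact_mod_cast hx) with h' | h'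
    · exact hH h'
    · exact hH' h'
  · push_neg at hcase
    have hnone : ∀ h ∈ G, ∀ H' : Finset A, ↑H' ⊆ G → ¬ g ≤ h →
        f ((g ⊓ h) ⊓ (((H ∪ H').sup id))ᶜ) = ⊥ := hcase
    set y : A := g ⊓ (H.sup id)ᶜ with hy
    set b : B := f y with hb
    -- dichotomy: every normal form below `y` maps to `⊥` or to `b`.
    have hdich : ∀ x : A, NF G x → x ≤ y → f x = ⊥ ∨ f x = b := by
      intro x hx
      induction hx with
      | bot => intro _; left; exact map_bot f
      | diff hh' hH' =>
        rename_i h' H'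
        intro hle
        by_cases hgh : g ≤ h'
        · by_cases hk : ∃ k ∈ H', g ≤ k
          · obtain ⟨k, hkH, hgk⟩ := hk
            left
            have h1 : h' ⊓ (H'.sup id)ᶜ ≤ k := le_trans (le_trans hle inf_le_left) hgk
            have h2 : h' ⊓ (H'.sup id)ᶜ ≤ kᶜ :=
              le_trans inf_le_right (compl_le_compl (Finset.le_sup (f := id) hkH))
            have : h' ⊓ (H'.sup id)ᶜ = ⊥ := le_bot_iff.mp (le_inf h1 h2 |>.trans_eq inf_compl_eq_bot)
            rw [this]; exact map_bot f
          · push_neg at hk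
            right
            -- decompose y = x' ⊔ (y ⊓ sup H') with x' = g ⊓ (sup (H ∪ H'))ᶜ
            have hdec : y = (y ⊓ (H'.sup id)ᶜ) ⊔ (y ⊓ H'.sup id) := by
              rw [← inf_sup_left, compl_sup_eq_top, inf_top_eq]
            have hx' : y ⊓ (H'.sup id)ᶜ = g ⊓ (((H ∪ H').sup id))ᶜ := by
              rw [Finset.sup_union, compl_sup, hy, inf_assoc]
            have hrest : f (y ⊓ H'.sup id) = ⊥ := by
              rw [Finset.sup_inf_distrib_left]
              refine sup_map_bot f ?_
              intro k hk'
              have e : y ⊓ id k = (g ⊓ k) ⊓ (((H ∪ (∅ : Finset A)).sup id))ᶜ := by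
                rw [Finset.union_empty, hy, id]
                ac_rfl
              rw [e]
              exact hnone k (hH' hk') ∅ (by simp) (hk k hk')
            have hle2 : g ⊓ (((H ∪ H').sup id))ᶜ ≤ h' ⊓ (H'.sup id)ᶜ := by
              refine le_inf (le_trans inf_le_left hgh) ?_
              rw [Finset.sup_union, compl_sup]
              exact le_trans inf_le_right inf_le_right
            have hble : b ≤ f (h' ⊓ (H'.sup id)ᶜ) := by
              have : b = f (y ⊓ (H'.sup id)ᶜ) := by
                conv_lhs => rw [hb, hdec]
                rw [map_sup, hrest, sup_bot_eq]
              rw [this, hx']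
              exact OrderHomClass.mono f hle2
            have hfle : f (h' ⊓ (H'.sup id)ᶜ) ≤ b := OrderHomClass.mono f hle
            exact le_antisymm hfle hble
        · left
          have e : h' ⊓ (H'.sup id)ᶜ = (g ⊓ h') ⊓ (((H ∪ H').sup id))ᶜ := by
            have e1 : h' ⊓ (H'.sup id)ᶜ = (h' ⊓ (H'.sup id)ᶜ) ⊓ y := inf_eq_left.mpr hle |>.symm
            rw [e1, hy, Finset.sup_union, compl_sup]
            ac_rfl
          rw [e]
          exact hnone h' hh' H' hH' hgh
      | sup _ _ ih1 ih2 =>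
        intro hle
        rcases ih1 (le_trans le_sup_left hle) with h1 | h1 <;>
          rcases ih2 (le_trans le_sup_right hle) with h2 | h2 <;>
            simp [map_sup, h1, h2]
    refine ⟨b, hne, ?_⟩
    intro c hc
    obtain ⟨a, ha⟩ := hf c
    have hnf' : NF G (a ⊓ y) := nf_inf hmeet (hnf a) (NF.diff hg hH)
    have hfa : f (a ⊓ y) = c := by
      rw [map_inf, ha, ← hb, inf_eq_left.mpr hc.le]
    rcases hdich (a ⊓ y) hnf' inf_le_right with h1 | h1
    · rw [hfa] at h1; exact h1
    · rw [hfa] at h1; exact absurd h1 hc.ne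

end Aux

/-- Every well-generated Boolean algebra is superatomic: if `A` is generated by a
well-founded `∧`-subsemilattice `G`, then every nontrivial homomorphic image of `A`
contains an atom. -/
theorem stmt_7 {A B : Type*} [BooleanAlgebra A] [BooleanAlgebra B]
    (G : Set A) (hmeet : ∀ a ∈ G, ∀ b ∈ G, a ⊓ b ∈ G)
    (hwf : Set.WellFoundedOn G (· < ·))
    (hgen : ∀ a : A, BoolGen G a)
    (f : BoundedLatticeHom A B) (hf : Function.Surjective f)
    (hB : (⊥ : B) ≠ ⊤) :
    ∃ b : B, IsAtom b := by
  set G' : Set A := insert ⊤ G with hG'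
  have htop : (⊤ : A) ∈ G' := Set.mem_insert _ _
  have hmeet' : ∀ a ∈ G', ∀ b ∈ G', a ⊓ b ∈ G' := by
    rintro a (rfl | ha) b (rfl | hb)
    · rw [top_inf_eq]; exact Set.mem_insert _ _
    · rw [top_inf_eq]; exact Set.mem_insert_of_mem _ hb
    · rw [inf_top_eq]; exact Set.mem_insert_of_mem _ ha
    · exact Set.mem_insert_of_mem _ (hmeet _ ha _ hb)
  have hwf' : Set.WellFoundedOn G' (· < ·) := hwf.insert ⊤
  have hgen' : ∀ a : A, BoolGen G' a := by
    intro a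
    have h := hgen a
    induction h with
    | base h => exact BoolGen.base (Set.mem_insert_of_mem _ h)
    | bot => exact BoolGen.bot
    | top => exact BoolGen.top
    | sup _ _ ih1 ih2 => exact BoolGen.sup ih1 ih2
    | inf _ _ ih1 ih2 => exact BoolGen.inf ih1 ih2
    | compl _ ih => exact BoolGen.compl ih
  have hnf : ∀ a : A, NF G' a :=
    nf_all htop hmeet' hgen' (fun a ha => nf_of_mem ha)
  have hne : f ((⊤ : A) ⊓ (((∅ : Finset A).sup id))ᶜ) ≠ ⊥ := by
    have e : (⊤ : A) ⊓ (((∅ : Finset A).sup id))ᶜ = ⊤ := by simp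
    rw [e, map_top]
    exact hB.symm
  exact key htop hmeet' hwf' f hf hnf ⊤ htop ∅ (by simp) hne
end

section
/- A homomorphic image of a well-generated Boolean algebra is well-generated: if π : A → B is a surjective Boolean homomorphism and G ⊆ A is a well-founded ∧-subsemilattice generating A, then π[G] is a well-founded ∧-subsemilattice generating B. -/
/-- A homomorphic image of a well-generated Boolean algebra is well-generated: the image
of a well-founded meet-closed generating set is a well-founded meet-closed generating
set of the image. -/
theorem stmt_8 {A B : Type*} [BooleanAlgebra A] [BooleanAlgebra B]
    (G : Set A) (hmeet : ∀ a ∈ G, ∀ b ∈ G, a ⊓ b ∈ G)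
    (hwf : Set.WellFoundedOn G (· < ·))
    (hgen : ∀ a : A, BoolGen G a)
    (f : BoundedLatticeHom A B) (hf : Function.Surjective f) :
    Set.WellFoundedOn (f '' G) (· < ·) ∧
    (∀ a ∈ f '' G, ∀ b ∈ f '' G, a ⊓ b ∈ f '' G) ∧
    (∀ b : B, BoolGen (f '' G) b) := by
  have hcompl : ∀ a : A, f aᶜ = (f a)ᶜ := by
    intro a
    refine (IsCompl.compl_eq ?_).symm
    rw [isCompl_iff, disjoint_iff, codisjoint_iff]
    constructor
    · rw [← map_inf, inf_compl_eq_bot, map_bot]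
    · rw [← map_sup, sup_compl_eq_top, map_top]
  refine ⟨?_, ?_, ?_⟩
  · rw [Set.wellFoundedOn_iff_no_descending_seq]
    intro g hg
    rw [Set.wellFoundedOn_iff_no_descending_seq] at hwf
    -- choose preimages
    choose a ha hfa using hg
    -- build meet sequence
    let b : ℕ → A := fun n => Nat.rec (a 0) (fun n bn => bn ⊓ a (n + 1)) n
    have hbG : ∀ n, b n ∈ G := by
      intro n
      induction n with
      | zero => exact ha 0
      | succ n ih => exact hmeet _ ih _ (ha (n + 1))
    have hfb : ∀ n, f (b n) = g n := by
      intro n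
      induction n with
      | zero => exact hfa 0
      | succ n ih =>
        show f (b n ⊓ a (n + 1)) = g (n + 1)
        rw [map_inf, ih, hfa (n + 1), inf_eq_right]
        exact le_of_lt (g.map_rel_iff.2 (Nat.lt_succ_self n))
    have hdesc : ∀ n, b (n + 1) < b n := by
      intro n
      refine lt_of_le_of_ne inf_le_left ?_
      intro h
      have : g (n + 1) = g n := by rw [← hfb, ← hfb, h]
      exact absurd (g.map_rel_iff.2 (Nat.lt_succ_self n)) (by simp [this])
    exact hwf (RelEmbedding.natGT b hdesc) hbG
  · rintro x ⟨a, haG, rfl⟩ y ⟨b, hbG, rfl⟩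
    exact ⟨a ⊓ b, hmeet a haG b hbG, map_inf f a b⟩
  · intro b
    obtain ⟨a, rfl⟩ := hf b
    induction hgen a with
    | base h => exact BoolGen.base ⟨_, h, rfl⟩
    | bot => rw [map_bot]; exact BoolGen.bot
    | top => rw [map_top]; exact BoolGen.top
    | sup _ _ iha ihb => rw [map_sup]; exact BoolGen.sup iha ihb
    | inf _ _ iha ihb => rw [map_inf]; exact BoolGen.inf iha ihb
    | compl _ ih => rw [hcompl]; exact BoolGen.compl ih
end

section
/- If A is a Boolean algebra generated by a well-founded ∧-subsemilattice G and A is nontrivial (0 ≠ 1), then A contains an atom. -/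
/-- A nontrivial Boolean algebra generated by a well-founded `∧`-subsemilattice
contains an atom. -/
theorem stmt_9 {A : Type*} [BooleanAlgebra A]
    (G : Set A) (hmeet : ∀ a ∈ G, ∀ b ∈ G, a ⊓ b ∈ G)
    (hwf : Set.WellFoundedOn G (· < ·))
    (hgen : ∀ a : A, BoolGen G a)
    (hA : (⊥ : A) ≠ ⊤) :
    ∃ a : A, IsAtom a := by
  by_cases hG : ∀ x ∈ G, x = (⊥ : A)
  · -- everything is ⊥ or ⊤, so ⊤ is an atom
    have key : ∀ a : A, a = ⊥ ∨ a = ⊤ := by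
      intro a
      induction hgen a with
      | base h => exact Or.inl (hG _ h)
      | bot => exact Or.inl rfl
      | top => exact Or.inr rfl
      | sup ha hb iha ihb =>
        rcases iha with h | h <;> rcases ihb with h' | h' <;> simp [h, h']
      | inf ha hb iha ihb =>
        rcases iha with h | h <;> rcases ihb with h' | h' <;> simp [h, h']
      | compl ha iha => rcases iha with h | h <;> simp [h]
    refine ⟨⊤, hA.symm, fun b hb => ?_⟩
    rcases key b with h | h
    · exact h
    · exact absurd h hb.ne
    -- done
  · push_neg at hG
    obtain ⟨g0, hg0G, hg0ne⟩ := hG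
    -- find a minimal nonzero element of G
    obtain ⟨⟨g, hgG⟩, hgne, hmin⟩ :=
      hwf.has_min {x : G | (x : A) ≠ ⊥} ⟨⟨g0, hg0G⟩, hg0ne⟩
    simp only [Set.mem_setOf_eq] at hgne
    -- minimality: any element of G strictly below g is ⊥
    have hmin' : ∀ x ∈ G, x < g → x = ⊥ := by
      intro x hx hlt
      by_contra hxne
      exact hmin ⟨x, hx⟩ hxne hlt
    have key : ∀ a : A, a ⊓ g = g ∨ a ⊓ g = ⊥ := by
      intro a
      induction hgen a with
      | base h =>
        rcases lt_or_eq_of_le (inf_le_right : _ ⊓ g ≤ g) with hlt | heq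
        · exact Or.inr (hmin' _ (hmeet _ h _ hgG) hlt)
        · exact Or.inl heq
      | bot => exact Or.inr (by simp)
      | top => exact Or.inl (by simp)
      | sup ha hb iha ihb =>
        rename_i a b
        rcases iha with h | h
        · left
          exact le_antisymm inf_le_right
            (by calc g = a ⊓ g := h.symm
                  _ ≤ (a ⊔ b) ⊓ g := inf_le_inf_right g le_sup_left)
        · rcases ihb with h' | h'
          · left
            exact le_antisymm inf_le_right
              (by calc g = b ⊓ g := h'.symm
                    _ ≤ (a ⊔ b) ⊓ g := inf_le_inf_right g le_sup_right)
          · right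
            rw [inf_sup_right, h, h', bot_sup_eq]
      | inf ha hb iha ihb =>
        rename_i a b
        rcases iha with h | h
        · rcases ihb with h' | h'
          · left
            rw [inf_assoc, h']
            exact h
          · right
            rw [inf_assoc, h', inf_bot_eq]
        · right
          rw [inf_right_comm, h, bot_inf_eq]
      | compl ha iha =>
        rename_i a
        rcases iha with h | h
        · right
          calc aᶜ ⊓ g = aᶜ ⊓ (a ⊓ g) := by rw [h]
            _ = ⊥ := by rw [← inf_assoc, compl_inf_self, bot_inf_eq]
        · left
          have : g ≤ aᶜ := by
            rw [le_compl_iff_disjoint_left]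
            exact disjoint_iff.mpr (h)
          exact inf_eq_right.mpr this
    refine ⟨g, hgne, fun b hb => ?_⟩
    rcases key b with h | h
    · rw [inf_eq_left.mpr hb.le] at h
      exact absurd h hb.ne
    · rwa [inf_eq_left.mpr hb.le] at h
end

section
/- If A is a ≪-unital C*-algebra (i.e., A has a subset U of the positive unit ball that is ≪-directed and ≪-approximately cofinal), then every quotient of A by a closed two-sided ideal is ≪-unital. -/
/-!
The image `π '' U` of a witness `U` for `A` is a witness for `B`: `≪` is an algebraic relation,
so it is preserved by `π`, and star homomorphisms between C⋆-algebras are positive and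
contractive, so `π '' U` lies in the positive unit ball and `‖π a - π a * π u‖ ≤ ‖a - a * u‖`.
For cofinality, a positive `b` lifts to a positive `a`, which after rescaling lies in the
unit ball of `A`.
-/

/-- A C*-algebra is `≪`-unital if it has a subset `U` of the positive unit ball which is
`≪`-directed (for `a, b ∈ U` there is `u ∈ U` with `a = a*u` and `b = b*u`) and
`≪`-approximately cofinal (every positive `a` of norm at most one satisfies
`‖a - a*u‖ < ε` for some `u ∈ U`). -/
def LlUnital (A : Type*) [NonUnitalNormedRing A] [StarRing A] [CStarRing A]
    [NormedSpace ℂ A] [IsScalarTower ℂ A A] [SMulCommClass ℂ A A]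
    [PartialOrder A] [StarOrderedRing A] : Prop :=
  ∃ U : Set A,
    (∀ u ∈ U, 0 ≤ u ∧ ‖u‖ ≤ 1) ∧
    (∀ a ∈ U, ∀ b ∈ U, ∃ u ∈ U, a = a * u ∧ b = b * u) ∧
    (∀ a : A, 0 ≤ a → ‖a‖ ≤ 1 → ∀ ε : ℝ, 0 < ε → ∃ u ∈ U, ‖a - a * u‖ < ε)

open scoped ENNReal
open Filter

section Contractive

variable {A B : Type*}
    [NonUnitalNormedRing A] [StarRing A] [CStarRing A]
    [NormedSpace ℂ A] [IsScalarTower ℂ A A] [SMulCommClass ℂ A A] [CompleteSpace A]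
    [NonUnitalNormedRing B] [StarRing B] [CStarRing B]
    [NormedSpace ℂ B] [IsScalarTower ℂ B B] [SMulCommClass ℂ B B] [CompleteSpace B]

/- Without `StarModule ℂ A` the unitization is not known to be a C⋆-ring, so Mathlib's
`NonUnitalStarAlgHom.norm_apply_le` does not apply; the spectral radius of `inr x` is instead
computed from the C⋆-identity in `A`. -/

omit [CompleteSpace A] in
lemma IsSelfAdjoint.nnnorm_inr_pow_two_pow {x : A} (hx : IsSelfAdjoint x) (n : ℕ) :
    ‖(x : Unitization ℂ A) ^ 2 ^ n‖₊ = ‖x‖₊ ^ 2 ^ n := by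
  induction n generalizing x with
  | zero => simp [Unitization.nnnorm_inr]
  | succ n ih =>
    have hxx : IsSelfAdjoint (x * x) := by
      rw [IsSelfAdjoint, star_mul, hx.star_eq]
    rw [pow_succ', pow_mul, pow_mul, sq, ← Unitization.inr_mul, ih hxx, hx.nnnorm_mul_self]

lemma IsSelfAdjoint.spectralRadius_inr_eq_nnnorm {x : A} (hx : IsSelfAdjoint x) :
    spectralRadius ℂ (x : Unitization ℂ A) = ‖x‖₊ := by
  refine tendsto_nhds_unique ?_
    (tendsto_const_nhds (x := (‖x‖₊ : ℝ≥0∞)) (f := (atTop : Filter ℕ)))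
  convert (spectrum.pow_nnnorm_pow_one_div_tendsto_nhds_spectralRadius
      (x : Unitization ℂ A)).comp (tendsto_pow_atTop_atTop_of_one_lt (r := 2) one_lt_two) using 1
  refine funext fun n => ?_
  rw [Function.comp_apply, hx.nnnorm_inr_pow_two_pow n, ENNReal.coe_pow,
    ← ENNReal.rpow_natCast, ← ENNReal.rpow_mul]
  simp

lemma NonUnitalStarAlgHom.norm_apply_le_of_isSelfAdjoint (π : A →⋆ₙₐ[ℂ] B) {x : A}
    (hx : IsSelfAdjoint x) : ‖π x‖ ≤ ‖x‖ := by
  let ψ : Unitization ℂ A →ₐ[ℂ] Unitization ℂ B :=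
    Unitization.lift ((Unitization.inrNonUnitalAlgHom ℂ B).comp π.toNonUnitalAlgHom)
  have hψ : ψ x = π x := by simp [ψ]
  have hspec :
      spectralRadius ℂ (π x : Unitization ℂ B) ≤ spectralRadius ℂ (x : Unitization ℂ A) :=
    hψ ▸ iSup_le_iSup_of_subset (AlgHom.spectrum_apply_subset ψ _)
  rw [(hx.map π).spectralRadius_inr_eq_nnnorm, hx.spectralRadius_inr_eq_nnnorm,
    ENNReal.coe_le_coe] at hspec
  exact hspec

lemma NonUnitalStarAlgHom.norm_apply_le' (π : A →⋆ₙₐ[ℂ] B) (a : A) : ‖π a‖ ≤ ‖a‖ := by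
  have hsq : ‖π a‖ * ‖π a‖ ≤ ‖a‖ * ‖a‖ := by
    rw [← CStarRing.norm_star_mul_self, ← CStarRing.norm_star_mul_self, ← map_star, ← map_mul]
    exact π.norm_apply_le_of_isSelfAdjoint (.star_mul_self a)
  exact (mul_self_le_mul_self_iff (norm_nonneg _) (norm_nonneg _)).2 hsq

end Contractive

section Positive

variable {A B : Type*} [NonUnitalRing A] [StarRing A] [PartialOrder A] [StarOrderedRing A]

/- The scalar is a square of `(n : ℂ)⁻¹`, which commutes with `star` even without
`StarModule ℂ A`. -/
lemma inv_natCast_sq_smul_nonneg [Module ℂ A] [IsScalarTower ℂ A A] [SMulCommClass ℂ A A] (n : ℕ)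
    {a : A} (ha : 0 ≤ a) : 0 ≤ (n : ℂ)⁻¹ ^ 2 • a := by
  rw [StarOrderedRing.nonneg_iff] at ha ⊢
  induction ha using AddSubmonoid.closure_induction with
  | mem x hx =>
    obtain ⟨s, rfl⟩ := hx
    refine AddSubmonoid.subset_closure ⟨(n : ℂ)⁻¹ • s, ?_⟩
    change star ((n : ℂ)⁻¹ • s) * ((n : ℂ)⁻¹ • s) = _
    rw [star_inv_natCast_smul, smul_mul_assoc, mul_smul_comm, smul_smul, sq]
  | zero => rw [smul_zero]; exact zero_mem _
  | add x y _ _ hx hy => rw [smul_add]; exact add_mem hx hy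

lemma exists_nonneg_preimage_of_surjective [NonUnitalRing B] [StarRing B] [PartialOrder B]
    [StarOrderedRing B] {F : Type*} [FunLike F A B] [NonUnitalRingHomClass F A B]
    [StarHomClass F A B] (π : F) (hπ : Function.Surjective π) {b : B} (hb : 0 ≤ b) :
    ∃ a : A, 0 ≤ a ∧ π a = b := by
  rw [StarOrderedRing.nonneg_iff] at hb
  induction hb using AddSubmonoid.closure_induction with
  | mem x hx =>
    obtain ⟨s, rfl⟩ := hx
    obtain ⟨c, rfl⟩ := hπ s
    exact ⟨star c * c, star_mul_self_nonneg c, by rw [map_mul, map_star]⟩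
  | zero => exact ⟨0, le_rfl, map_zero π⟩
  | add x y _ _ hx hy =>
    obtain ⟨a₁, ha₁, rfl⟩ := hx
    obtain ⟨a₂, ha₂, rfl⟩ := hy
    exact ⟨a₁ + a₂, add_nonneg ha₁ ha₂, map_add π a₁ a₂⟩

end Positive

lemma exists_norm_sub_mul_lt_of_nonneg {A : Type*} [NonUnitalNormedRing A] [StarRing A]
    [NormedSpace ℂ A] [IsScalarTower ℂ A A] [SMulCommClass ℂ A A]
    [PartialOrder A] [StarOrderedRing A] {U : Set A}
    (hU : ∀ a : A, 0 ≤ a → ‖a‖ ≤ 1 → ∀ ε : ℝ, 0 < ε → ∃ u ∈ U, ‖a - a * u‖ < ε)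
    {a : A} (ha : 0 ≤ a) {ε : ℝ} (hε : 0 < ε) : ∃ u ∈ U, ‖a - a * u‖ < ε := by
  obtain ⟨n, hn⟩ := exists_nat_gt ‖a‖
  have hn_pos : (0 : ℝ) < n := (norm_nonneg a).trans_lt hn
  have hn_one : (1 : ℝ) ≤ n := Nat.one_le_cast.2 (Nat.cast_pos.1 hn_pos)
  set r : ℂ := (n : ℂ)⁻¹ ^ 2
  have hr : ‖r‖ = (n : ℝ)⁻¹ ^ 2 := by simp [r]
  have hra : ‖r • a‖ ≤ 1 := by
    rw [norm_smul, hr, inv_pow, inv_mul_le_iff₀ (by positivity), mul_one]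
    nlinarith
  obtain ⟨u, hu, hu_lt⟩ :=
    hU (r • a) (inv_natCast_sq_smul_nonneg n ha) hra (‖r‖ * ε) (by rw [hr]; positivity)
  refine ⟨u, hu, lt_of_mul_lt_mul_left ?_ (norm_nonneg r)⟩
  rwa [smul_mul_assoc, ← smul_sub, norm_smul] at hu_lt

/-- The quotient by a closed ideal is modelled as the codomain of a surjective star
homomorphism. -/
theorem stmt_15 {A B : Type*}
    [NonUnitalNormedRing A] [StarRing A] [CStarRing A]
    [NormedSpace ℂ A] [IsScalarTower ℂ A A] [SMulCommClass ℂ A A]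
    [PartialOrder A] [StarOrderedRing A] [CompleteSpace A]
    [NonUnitalNormedRing B] [StarRing B] [CStarRing B]
    [NormedSpace ℂ B] [IsScalarTower ℂ B B] [SMulCommClass ℂ B B]
    [PartialOrder B] [StarOrderedRing B] [CompleteSpace B]
    (π : A →⋆ₙₐ[ℂ] B) (hπ : Function.Surjective π)
    (hA : LlUnital A) : LlUnital B := by
  obtain ⟨U, hU_ball, hU_directed, hU_cofinal⟩ := hA
  refine ⟨π '' U, ?_, ?_, ?_⟩
  · rintro _ ⟨u, hu, rfl⟩
    exact ⟨map_nonneg π (hU_ball u hu).1, (π.norm_apply_le' u).trans (hU_ball u hu).2⟩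
  · rintro _ ⟨x, hx, rfl⟩ _ ⟨y, hy, rfl⟩
    obtain ⟨u, hu, hxu, hyu⟩ := hU_directed x hx y hy
    exact ⟨π u, ⟨u, hu, rfl⟩, by rw [← map_mul, ← hxu], by rw [← map_mul, ← hyu]⟩
  · intro b hb _ ε hε
    obtain ⟨a, ha, rfl⟩ := exists_nonneg_preimage_of_surjective π hπ hb
    obtain ⟨u, hu, hau⟩ := exists_norm_sub_mul_lt_of_nonneg hU_cofinal ha hε
    refine ⟨π u, ⟨u, hu, rfl⟩, ?_⟩
    rw [← map_mul, ← map_sub]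
    exact (π.norm_apply_le' _).trans_lt hau
end

section
/- There exists a family {(A_ξ, B_ξ) : ξ < ω₂} of pairs of disjoint uncountable subsets of ω₁ such that (A_ξ ∪ B_ξ) ∩ (A_η ∪ B_η) is countable for all ξ ≠ η, and such that for every function G : ω₂ → [ω₂]^{≤ω} there are distinct ξ, ξ' < ω₂ with (A_ξ ∩ B_{ξ'}) \ ⋃{A_η ∪ B_η : η ∈ (G(ξ)\{ξ}) ∪ (G(ξ')\{ξ'})} ≠ ∅. -/
open Cardinal Set Classical

noncomputable section

namespace Stmt19Aux

abbrev W : Type 1 := {o : Ordinal // o < (aleph 1).ord}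
abbrev J : Type 1 := {o : Ordinal // o < (aleph 2).ord}



lemma mkW : #W = (aleph 1 : Cardinal.{1}) := by
  have : #W = #(Set.Iio ((aleph 1).ord)) := Cardinal.mk_congr (Equiv.subtypeEquivRight (fun _ => Iff.rfl))
  rw [this, Ordinal.mk_Iio_ordinal, Cardinal.card_ord, Cardinal.lift_aleph]
  norm_num

lemma mkJ : #J = (aleph 2 : Cardinal.{1}) := by
  have : #J = #(Set.Iio ((aleph 2).ord)) := Cardinal.mk_congr (Equiv.subtypeEquivRight (fun _ => Iff.rfl))
  rw [this, Ordinal.mk_Iio_ordinal, Cardinal.card_ord, Cardinal.lift_aleph]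
  norm_num

lemma not_countable_univ_W : ¬ (Set.univ : Set W).Countable := by
  rw [countable_iff_lt_aleph_one, mk_univ, mkW]
  exact lt_irrefl _

lemma mk_lt_of_lt_ord {a : Ordinal} (ha : a < (aleph 1).ord) :
    #{β : W | β.val < a} < (aleph 1 : Cardinal.{1}) := by
  have e : {β : W | β.val < a} ≃ {o : Ordinal // o < a} := by
    refine ⟨fun x => ⟨x.1.1, x.2⟩, fun o => ⟨⟨o.1, lt_trans o.2 ha⟩, o.2⟩, ?_, ?_⟩ <;> intro x <;> rfl
  rw [Cardinal.mk_congr e]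
  have : #{o : Ordinal // o < a} = #(Set.Iio a) := Cardinal.mk_congr (Equiv.subtypeEquivRight (fun _ => Iff.rfl))
  rw [this, Ordinal.mk_Iio_ordinal]
  have h1 : a.card < aleph 1 := Cardinal.lt_ord.mp ha
  calc Cardinal.lift.{1} a.card < Cardinal.lift.{1} (aleph 1) := Cardinal.lift_lt.mpr h1
    _ = aleph 1 := by rw [Cardinal.lift_aleph]; norm_num

lemma countable_Iio (k : W) : {β : W | β < k}.Countable := by
  rw [countable_iff_lt_aleph_one]
  exact mk_lt_of_lt_ord k.2

lemma countable_Iic (k : W) : {β : W | β ≤ k}.Countable := by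
  have : {β : W | β ≤ k} ⊆ {β : W | β < k} ∪ {k} := by
    intro x hx
    have hx' : x ≤ k := hx
    rcases lt_or_eq_of_le hx' with h | h
    · exact Or.inl h
    · exact Or.inr (by simp [h])
  exact Set.Countable.mono this ((countable_Iio k).union (Set.countable_singleton k))

/-- From a countable set, there is an element of `W` not in it. -/
lemma exists_notin {S : Set W} (hS : S.Countable) : ∃ v : W, v ∉ S := by
  by_contra h
  push_neg at h
  exact not_countable_univ_W (hS.mono (fun x _ => h x))

/-- Every countable subset of `W` is strictly bounded. -/
lemma exists_strict_bound {S : Set W} (hS : S.Countable) : ∃ b : W, ∀ x ∈ S, x < b := by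
  have hL : (⋃ x ∈ S, {β : W | β ≤ x}).Countable :=
    Set.Countable.biUnion hS (fun x _ => countable_Iic x)
  obtain ⟨b, hb⟩ := exists_notin hL
  refine ⟨b, fun x hx => ?_⟩
  by_contra hbx
  push_neg at hbx
  exact hb (Set.mem_biUnion hx hbx)

/-- From an uncountable set, an element above any given bound. -/
lemma uncountable_exists_gt {S : Set W} (hS : ¬ S.Countable) (b : W) : ∃ x ∈ S, b < x := by
  by_contra h
  push_neg at h
  exact hS ((countable_Iic b).mono (fun x hx => h x hx))



lemma wfW : WellFounded ((· < ·) : W → W → Prop) :=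
  InvImage.wf (fun x : W => x.1) Ordinal.lt_wf

def w0 : W := ⟨0, by
  rw [pos_iff_ne_zero]
  intro h
  have := Cardinal.ord_eq_zero.mp h
  exact (Cardinal.aleph_pos 1).ne' this⟩

def wsucc (x : W) : W := ⟨x.1 + 1, (Cardinal.isSuccLimit_ord (by
    rw [← Cardinal.aleph_zero]
    exact Cardinal.aleph_le_aleph.mpr zero_le_one)).succ_lt x.2⟩

lemma wsucc_ne (x : W) : wsucc x ≠ x := by
  intro h
  have h2 : x.1 + 1 = x.1 := congrArg Subtype.val h
  have := Order.lt_succ x.1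
  rw [Ordinal.add_one_eq_succ] at h2
  exact absurd h2 (ne_of_gt this)




section Plant
variable (g : W → W → W)

def GoodSet (k : W) (pr : ∀ j : W, j < k → W) : Set W :=
  {β | k ≤ β ∧ (∀ j (hj : j < k), pr j hj ≠ β) ∧ (∀ j, j < k → g k β ≠ g j β)}

def plantL : W → W :=
  wfW.fix (fun k rec => if h : (GoodSet g k rec).Nonempty then h.some else w0)

lemma plantL_eq (k : W) :
    plantL g k = if h : (GoodSet g k (fun j _ => plantL g j)).Nonempty then h.some else w0 :=
  wfW.fix_eq _ k

lemma plantL_spec (hg : ∀ j k : W, j < k → {β | g k β = g j β}.Countable) (k : W) :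
    plantL g k ∈ GoodSet g k (fun j _ => plantL g j) := by
  have hbad : ({β : W | β < k} ∪ ((⋃ j ∈ {j : W | j < k}, {plantL g j}) ∪
      ⋃ j ∈ {j : W | j < k}, {β | g k β = g j β})).Countable := by
    refine ((countable_Iio k).union (Set.Countable.union ?_ ?_))
    · exact Set.Countable.biUnion (countable_Iio k) (fun j _ => Set.countable_singleton _)
    · exact Set.Countable.biUnion (countable_Iio k) (fun j hj => hg j k hj)
  obtain ⟨v, hv⟩ := exists_notin hbad
  have hvg : v ∈ GoodSet g k (fun j _ => plantL g j) := by
    simp only [Set.mem_union, Set.mem_setOf_eq, not_or, Set.mem_iUnion, Set.mem_singleton_iff,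
      not_exists] at hv
    refine ⟨le_of_not_gt hv.1, ?_, ?_⟩
    · intro j hj hEq
      exact hv.2.1 j hj hEq.symm
    · intro j hj hEq
      exact hv.2.2 j hj hEq
  have hne : (GoodSet g k (fun j _ => plantL g j)).Nonempty := ⟨v, hvg⟩
  rw [plantL_eq]
  rw [dif_pos hne]
  exact hne.some_mem

lemma plantL_inj (hg : ∀ j k : W, j < k → {β | g k β = g j β}.Countable) :
    Function.Injective (plantL g) := by
  intro j k hEq
  by_contra hne
  rcases lt_or_gt_of_ne hne with h | h
  · exact ((plantL_spec g hg k).2.1 j h) hEq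
  · exact ((plantL_spec g hg j).2.1 k h) hEq.symm

def freshV (β : W) : W :=
  if h : {v : W | ∀ j : W, j ≤ β → v ≠ g j β}.Nonempty then h.some else w0

lemma freshV_spec (β : W) : ∀ j : W, j ≤ β → freshV g β ≠ g j β := by
  have hbad : ((fun j => g j β) '' {j : W | j ≤ β}).Countable :=
    (countable_Iic β).image _
  obtain ⟨v, hv⟩ := exists_notin hbad
  have hne : {v : W | ∀ j : W, j ≤ β → v ≠ g j β}.Nonempty := by
    refine ⟨v, fun j hj hEq => hv ⟨j, hj, hEq.symm⟩⟩
  rw [freshV, dif_pos hne]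
  exact hne.some_mem

end Plant

def smallFresh {α : Type 1} (vals : α → W) : W :=
  if h : {v : W | ∀ a, v ≠ vals a}.Nonempty then h.some else w0

lemma smallFresh_spec {α : Type 1} [Countable α] (vals : α → W) :
    ∀ a, smallFresh vals ≠ vals a := by
  have hbad : (Set.range vals).Countable := Set.countable_range _
  obtain ⟨v, hv⟩ := exists_notin hbad
  have hne : {v : W | ∀ a, v ≠ vals a}.Nonempty :=
    ⟨v, fun a hEq => hv ⟨a, hEq.symm⟩⟩
  rw [smallFresh, dif_pos hne]
  exact hne.some_mem

abbrev PredT (ζ : Ordinal.{0}) : Type 1 := {ξ : Ordinal // ξ < ζ}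

def stage (ζ : Ordinal) (prior : ∀ ξ : Ordinal, ξ < ζ → (W → W) × (W → W)) :
    (W → W) × (W → W) :=
  if h : Nonempty (W ≃ PredT ζ) then
    let e := Classical.choice h
    let g : W → W → W := fun k => (prior ((e k).1) ((e k).2)).1
    let g' : W → W → W := fun k => (prior ((e k).1) ((e k).2)).2
    (fun β => if hb : ∃ k, plantL g k = β then g hb.choose β else freshV g β,
     fun β => if hb : ∃ k, plantL g k = β then wsucc (g' hb.choose β) else w0)
  else
    (fun β => smallFresh (fun ξ : PredT ζ => (prior ξ.1 ξ.2).1 β), fun _ => w0)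

def Phi : Ordinal → (W → W) × (W → W) := Ordinal.lt_wf.fix stage

def F (ζ : Ordinal) : W → W := (Phi ζ).1
def F' (ζ : Ordinal) : W → W := (Phi ζ).2

lemma Phi_eq (ζ : Ordinal) : Phi ζ = stage ζ (fun ξ _ => Phi ξ) :=
  Ordinal.lt_wf.fix_eq stage ζ

def gB (ζ : Ordinal) (h : Nonempty (W ≃ PredT ζ)) : W → W → W :=
  fun k => F ((Classical.choice h k).1)

def gB' (ζ : Ordinal) (h : Nonempty (W ≃ PredT ζ)) : W → W → W :=
  fun k => F' ((Classical.choice h k).1)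

lemma F_big (ζ : Ordinal) (h : Nonempty (W ≃ PredT ζ)) :
    (∀ β, F ζ β = if hb : ∃ k, plantL (gB ζ h) k = β then gB ζ h hb.choose β
        else freshV (gB ζ h) β) ∧
    (∀ β, F' ζ β = if hb : ∃ k, plantL (gB ζ h) k = β then wsucc (gB' ζ h hb.choose β)
        else w0) := by
  constructor
  · intro β
    show (Phi ζ).1 β = _
    rw [Phi_eq, stage, dif_pos h]
    rfl
  · intro β
    show (Phi ζ).2 β = _
    rw [Phi_eq, stage, dif_pos h]
    rfl

lemma F_small (ζ : Ordinal) (h : ¬ Nonempty (W ≃ PredT ζ)) :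
    ∀ β, F ζ β = smallFresh (fun ξ : PredT ζ => F ξ.1 β) := by
  intro β
  show (Phi ζ).1 β = _
  rw [Phi_eq, stage, dif_neg h]
  rfl


lemma mkPred (ζ : Ordinal) : #(PredT ζ) = Cardinal.lift.{1} ζ.card := by
  have : #(PredT ζ) = #(Set.Iio ζ) :=
    Cardinal.mk_congr (Equiv.subtypeEquivRight (fun _ => Iff.rfl))
  rw [this, Ordinal.mk_Iio_ordinal]

lemma equiv_of_card (ζ : Ordinal) (hcard : ζ.card = aleph 1) : Nonempty (W ≃ PredT ζ) := by
  refine Cardinal.eq.mp ?_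
  rw [mkW, mkPred, hcard, Cardinal.lift_aleph]
  norm_num

lemma countable_PredT (ζ : Ordinal) (hζ : ζ < (aleph 2).ord)
    (h : ¬ Nonempty (W ≃ PredT ζ)) : Countable (PredT ζ) := by
  have hlt : ζ.card < aleph 2 := Cardinal.lt_ord.mp hζ
  have hle : ζ.card ≤ aleph 1 := by
    have := Cardinal.aleph_succ 1
    rw [show (2 : Ordinal) = Order.succ 1 by norm_num, this] at hlt
    exact Order.lt_succ_iff.mp hlt
  have hne : ζ.card ≠ aleph 1 := fun hEq => h (equiv_of_card ζ hEq)
  have hlt1 : ζ.card < aleph 1 := lt_of_le_of_ne hle hne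
  have : #(PredT ζ) < ℵ₁ := by
    rw [mkPred]
    calc Cardinal.lift.{1} ζ.card < Cardinal.lift.{1} (aleph 1) := Cardinal.lift_lt.mpr hlt1
      _ = ℵ₁ := by rw [Cardinal.lift_aleph]; norm_num
  rw [← Cardinal.mk_le_aleph0_iff]
  have h1 : (ℵ₁ : Cardinal.{1}) = Order.succ ℵ₀ := by
    rw [← Cardinal.aleph_zero, ← Cardinal.aleph_succ]
    norm_num
  rw [h1] at this
  exact Order.lt_succ_iff.mp this

lemma agr_symm {f₁ f₂ : W → W} (h : {β | f₁ β = f₂ β}.Countable) :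
    {β | f₂ β = f₁ β}.Countable := by
  have : {β | f₂ β = f₁ β} = {β | f₁ β = f₂ β} := by ext β; exact eq_comm
  rw [this]; exact h

lemma L_pairwise : ∀ ζ : Ordinal, ζ < (aleph 2).ord → ∀ ξ, ξ < ζ →
    {β : W | F ζ β = F ξ β}.Countable := by
  intro ζ
  refine Ordinal.lt_wf.induction (C := fun ζ => ζ < (aleph 2).ord → ∀ ξ, ξ < ζ →
    {β : W | F ζ β = F ξ β}.Countable) ζ ?_
  intro ζ IH hζ ξ hξ
  by_cases h : Nonempty (W ≃ PredT ζ)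
  · set e := Classical.choice h with he
    set g := gB ζ h with hgdef
    have hg : ∀ j k : W, j < k → {β | g k β = g j β}.Countable := by
      intro j k hjk
      have hnev : ((e k).1 : Ordinal) ≠ (e j).1 := by
        intro hEq
        exact (ne_of_gt hjk) (e.injective (Subtype.ext hEq))
      have hgk : g k = F (e k).1 := rfl
      have hgj : g j = F (e j).1 := rfl
      rcases lt_or_gt_of_ne hnev with hlt | hgt
      · rw [hgk, hgj]
        exact agr_symm (IH (e j).1 (e j).2 (lt_trans (e j).2 hζ) (e k).1 hlt)
      · rw [hgk, hgj]
        exact IH (e k).1 (e k).2 (lt_trans (e k).2 hζ) (e j).1 hgt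
    set k₀ := e.symm ⟨ξ, hξ⟩ with hk₀
    have hek₀ : ((e k₀).1 : Ordinal) = ξ := by rw [hk₀, Equiv.apply_symm_apply]
    have hsub : {β : W | F ζ β = F ξ β} ⊆
        {β : W | β < k₀} ∪ (plantL g '' {j : W | j ≤ k₀}) := by
      intro β hβ
      have hβ' : F ζ β = F ξ β := hβ
      rw [(F_big ζ h).1 β] at hβ'
      have hgk₀ : g k₀ β = F ξ β := by rw [hgdef]; show F (e k₀).1 β = F ξ β; rw [hek₀]
      by_cases hb : ∃ k, plantL g k = β
      · rw [dif_pos hb] at hβ'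
        have hpk₁ : plantL g hb.choose = β := hb.choose_spec
        have hk₁k₀ : hb.choose ≤ k₀ := by
          by_contra hlt
          push_neg at hlt
          have hnc := (plantL_spec g hg hb.choose).2.2 k₀ hlt
          rw [hpk₁] at hnc
          exact hnc (hβ'.trans hgk₀.symm)
        exact Or.inr ⟨hb.choose, hk₁k₀, hpk₁⟩
      · rw [dif_neg hb] at hβ'
        left
        by_contra hk₀β
        have hk₀β' : k₀ ≤ β := le_of_not_gt hk₀β
        exact (freshV_spec g β k₀ hk₀β') (hβ'.trans hgk₀.symm)
    exact Set.Countable.mono hsub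
      ((countable_Iio k₀).union ((countable_Iic k₀).image _))
  · have : Countable (PredT ζ) := countable_PredT ζ hζ h
    have hempty : {β : W | F ζ β = F ξ β} ⊆ (∅ : Set W) := by
      intro β hβ
      have hβ' : F ζ β = F ξ β := hβ
      rw [F_small ζ h β] at hβ'
      exact absurd hβ' (smallFresh_spec (fun ξ' : PredT ζ => F ξ'.1 β) ⟨ξ, hξ⟩)
    exact Set.Countable.mono hempty Set.countable_empty

lemma hgB (ζ : Ordinal) (hζ : ζ < (aleph 2).ord) (h : Nonempty (W ≃ PredT ζ)) :
    ∀ j k : W, j < k → {β | gB ζ h k β = gB ζ h j β}.Countable := by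
  intro j k hjk
  set e := Classical.choice h
  have hnev : ((e k).1 : Ordinal) ≠ (e j).1 := by
    intro hEq
    exact (ne_of_gt hjk) (e.injective (Subtype.ext hEq))
  have hgk : gB ζ h k = F (e k).1 := rfl
  have hgj : gB ζ h j = F (e j).1 := rfl
  rcases lt_or_gt_of_ne hnev with hlt | hgt
  · rw [hgk, hgj]
    exact agr_symm (L_pairwise (e j).1 (lt_trans (e j).2 hζ) (e k).1 hlt)
  · rw [hgk, hgj]
    exact L_pairwise (e k).1 (lt_trans (e k).2 hζ) (e j).1 hgt

lemma L_conflict (ζ : Ordinal) (hζ : ζ < (aleph 2).ord) (h : Nonempty (W ≃ PredT ζ))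
    (T : Set Ordinal) (hTsub : ∀ ξ ∈ T, ξ < ζ) (hT : ¬ T.Countable) (bstar : W) :
    ∃ ξ ∈ T, ∃ β : W, bstar < β ∧ F ζ β = F ξ β ∧ F' ζ β ≠ F' ξ β := by
  set e := Classical.choice h with he
  set g := gB ζ h with hgdef
  have hg := hgB ζ hζ h
  set K := {k : W | ((e k).1 : Ordinal) ∈ T} with hK
  have hKunc : ¬ K.Countable := by
    intro hKc
    apply hT
    have hTim : T ⊆ (fun k : W => ((e k).1 : Ordinal)) '' K := by
      intro ξ hξT
      refine ⟨e.symm ⟨ξ, hTsub ξ hξT⟩, ?_, ?_⟩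
      · show ((e (e.symm ⟨ξ, hTsub ξ hξT⟩)).1 : Ordinal) ∈ T
        rw [Equiv.apply_symm_apply]
        exact hξT
      · show ((e (e.symm ⟨ξ, hTsub ξ hξT⟩)).1 : Ordinal) = ξ
        rw [Equiv.apply_symm_apply]
    exact Set.Countable.mono hTim (hKc.image _)
  obtain ⟨k₀, hk₀K, hk₀gt⟩ := uncountable_exists_gt hKunc bstar
  set β := plantL g k₀ with hβ
  have hspec := plantL_spec g hg k₀
  have hk₀β : k₀ ≤ β := hspec.1
  refine ⟨(e k₀).1, hk₀K, β, lt_of_lt_of_le hk₀gt hk₀β, ?_, ?_⟩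
  · rw [(F_big ζ h).1 β]
    have hb : ∃ k, plantL g k = β := ⟨k₀, rfl⟩
    rw [dif_pos hb]
    have : hb.choose = k₀ := plantL_inj g hg hb.choose_spec
    rw [this]
    rfl
  · rw [(F_big ζ h).2 β]
    have hb : ∃ k, plantL g k = β := ⟨k₀, rfl⟩
    rw [dif_pos hb]
    have : hb.choose = k₀ := plantL_inj g hg hb.choose_spec
    rw [this]
    exact wsucc_ne _


lemma AgrC : ∀ ζ η : Ordinal, ζ < (aleph 2).ord → η < (aleph 2).ord → ζ ≠ η →
    {β : W | F ζ β = F η β}.Countable := by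
  intro ζ η hζ hη hne
  rcases lt_or_gt_of_ne hne with h | h
  · exact agr_symm (L_pairwise η hη ζ h)
  · exact L_pairwise ζ hζ η h


lemma aleph0_le_aleph1 : (ℵ₀ : Cardinal.{1}) ≤ ℵ₁ := le_of_lt (aleph0_lt_aleph_one)

lemma mkE1 : #((W × W × Bool) ⊕ (W × W × ℕ)) = #W := by
  rw [mk_sum, mk_prod, mk_prod, mk_prod, mk_prod, mkW]
  simp only [Cardinal.lift_id, Cardinal.mk_fintype, Fintype.card_bool, Nat.cast_ofNat,
    Cardinal.mk_denumerable, Cardinal.lift_aleph0, Cardinal.lift_natCast, Cardinal.lift_lift]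
  have h2 : (ℵ₁ : Cardinal.{1}) * 2 = ℵ₁ :=
    Cardinal.mul_eq_left aleph0_le_aleph1
      (((by norm_num : (2 : Cardinal.{1}) = ((2:ℕ) : Cardinal.{1})) ▸ (Cardinal.nat_lt_aleph0 2).le).trans aleph0_le_aleph1) (by norm_num)
  have h3 : (ℵ₁ : Cardinal.{1}) * ℵ₀ = ℵ₁ :=
    Cardinal.mul_eq_left aleph0_le_aleph1 aleph0_le_aleph1 Cardinal.aleph0_ne_zero
  have h4 : (ℵ₁ : Cardinal.{1}) * ℵ₁ = ℵ₁ := Cardinal.mul_eq_self aleph0_le_aleph1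
  simp only [Cardinal.lift_id']
  rw [show lift.{1,0} (2 : Cardinal.{0}) = (2 : Cardinal.{1}) from by norm_num]
  rw [← mul_assoc, ← mul_assoc, h4, h2, h3]
  exact Cardinal.add_eq_left aleph0_le_aleph1 le_rfl

def E1 : W ≃ ((W × W × Bool) ⊕ (W × W × ℕ)) :=
  Classical.choice (Cardinal.eq.mp mkE1.symm)

lemma sigma_exists : Nonempty (W ↪ (ℕ → Bool)) := by
  have h1 : Cardinal.lift.{0} #W ≤ Cardinal.lift.{1} #(ℕ → Bool) := by
    rw [mkW]
    have : #(ℕ → Bool) = 2 ^ (ℵ₀ : Cardinal.{0}) := by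
      rw [← Cardinal.power_def]
      simp
    rw [this]
    have hc : (ℵ₁ : Cardinal.{0}) ≤ 2 ^ (ℵ₀ : Cardinal.{0}) := by
      have := Cardinal.cantor (ℵ₀ : Cardinal.{0})
      have h1' : (ℵ₁ : Cardinal.{0}) = Order.succ ℵ₀ := by
        rw [← Cardinal.aleph_zero, ← Cardinal.aleph_succ]; norm_num
      rw [h1']
      exact Order.succ_le_of_lt this
    calc Cardinal.lift.{0} (ℵ₁ : Cardinal.{1}) = (ℵ₁ : Cardinal.{1}) := Cardinal.lift_id' _
      _ = Cardinal.lift.{1} (ℵ₁ : Cardinal.{0}) := by rw [Cardinal.lift_aleph]; norm_num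
      _ ≤ Cardinal.lift.{1} (2 ^ (ℵ₀ : Cardinal.{0})) := Cardinal.lift_le.mpr hc
  exact Cardinal.lift_mk_le'.mp h1

def sigma : W → ℕ → Bool := (Classical.choice sigma_exists).1

lemma sigma_inj : Function.Injective sigma := (Classical.choice sigma_exists).2

def sideOf (ζ : Ordinal) (y : (W × W × Bool) ⊕ (W × W × ℕ)) : Option Bool :=
  match y with
  | Sum.inl p => if p.2.1 = F ζ p.1 then some p.2.2 else none
  | Sum.inr q => if q.2.1 = F ζ q.1 then some (sigma (F' ζ q.1) q.2.2) else none

def Aset (ζ : Ordinal) : Set W := {x | sideOf ζ (E1 x) = some false}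
def Bset (ζ : Ordinal) : Set W := {x | sideOf ζ (E1 x) = some true}

lemma disjointAB (ζ : Ordinal) : Disjoint (Aset ζ) (Bset ζ) := by
  rw [Set.disjoint_left]
  intro x hxA hxB
  have : some false = some true := by
    rw [← hxA, ← hxB]
  simp at this

lemma uncountable_mem_of_inj {S : Set W} (f : W → W) (hf : Function.Injective f)
    (hr : ∀ β, f β ∈ S) : ¬ S.Countable := by
  intro hS
  have h1 : (Set.range f).Countable := hS.mono (by rintro _ ⟨β, rfl⟩; exact hr β)
  rw [countable_iff_lt_aleph_one, Cardinal.mk_range_eq f hf, mkW] at h1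
  exact lt_irrefl _ h1

lemma uncountableA (ζ : Ordinal) : ¬ (Aset ζ).Countable := by
  refine uncountable_mem_of_inj (fun β => E1.symm (Sum.inl (β, F ζ β, false))) ?_ ?_
  · intro a b hab
    have := E1.symm.injective hab
    have := (Sum.inl.inj this)
    exact congrArg Prod.fst this
  · intro β
    show sideOf ζ (E1 (E1.symm (Sum.inl (β, F ζ β, false)))) = some false
    rw [Equiv.apply_symm_apply]
    show (if F ζ β = F ζ β then some false else none) = some false
    rw [if_pos rfl]

lemma uncountableB (ζ : Ordinal) : ¬ (Bset ζ).Countable := by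
  refine uncountable_mem_of_inj (fun β => E1.symm (Sum.inl (β, F ζ β, true))) ?_ ?_
  · intro a b hab
    have := E1.symm.injective hab
    have := (Sum.inl.inj this)
    exact congrArg Prod.fst this
  · intro β
    show sideOf ζ (E1 (E1.symm (Sum.inl (β, F ζ β, true)))) = some true
    rw [Equiv.apply_symm_apply]
    show (if F ζ β = F ζ β then some true else none) = some true
    rw [if_pos rfl]

lemma mem_union_iff (ζ : Ordinal) (x : W) :
    x ∈ Aset ζ ∪ Bset ζ ↔ sideOf ζ (E1 x) ≠ none := by
  constructor
  · rintro (hx | hx) <;> · intro hnone; rw [show sideOf ζ (E1 x) = _ from hx] at hnone; simp at hnone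
  · intro hne
    rcases h : sideOf ζ (E1 x) with _ | b
    · exact absurd h hne
    · rcases b with _ | _
      · exact Or.inl h
      · exact Or.inr h

lemma side_ne_none (ζ : Ordinal) (y : (W × W × Bool) ⊕ (W × W × ℕ)) (hy : sideOf ζ y ≠ none) :
    (∃ p : W × W × Bool, y = Sum.inl p ∧ p.2.1 = F ζ p.1) ∨
    (∃ q : W × W × ℕ, y = Sum.inr q ∧ q.2.1 = F ζ q.1) := by
  rcases y with p | q
  · left
    refine ⟨p, rfl, ?_⟩
    by_contra hne
    apply hy
    show (if p.2.1 = F ζ p.1 then some p.2.2 else none) = none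
    rw [if_neg hne]
  · right
    refine ⟨q, rfl, ?_⟩
    by_contra hne
    apply hy
    show (if q.2.1 = F ζ q.1 then some (sigma (F' ζ q.1) q.2.2) else none) = none
    rw [if_neg hne]

lemma pairwiseAB (ζ η : Ordinal) (hζ : ζ < (aleph 2).ord) (hη : η < (aleph 2).ord)
    (hne : ζ ≠ η) : ((Aset ζ ∪ Bset ζ) ∩ (Aset η ∪ Bset η)).Countable := by
  set m : W × (Bool ⊕ ℕ) → W := fun p =>
    match p.2 with
    | Sum.inl b => E1.symm (Sum.inl (p.1, F ζ p.1, b))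
    | Sum.inr n => E1.symm (Sum.inr (p.1, F ζ p.1, n)) with hm
  have hsub : (Aset ζ ∪ Bset ζ) ∩ (Aset η ∪ Bset η) ⊆
      m '' ({β : W | F ζ β = F η β} ×ˢ (Set.univ : Set (Bool ⊕ ℕ))) := by
    rintro x ⟨hxζ, hxη⟩
    have hζ' := (mem_union_iff ζ x).mp hxζ
    have hη' := (mem_union_iff η x).mp hxη
    rcases side_ne_none ζ (E1 x) hζ' with ⟨p, hp, hpe⟩ | ⟨q, hq, hqe⟩
    · rcases side_ne_none η (E1 x) hη' with ⟨p', hp', hpe'⟩ | ⟨q', hq', _⟩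
      · have hpp' : p = p' := Sum.inl.inj (hp.symm.trans hp')
        subst hpp'
        refine ⟨(p.1, Sum.inl p.2.2), ⟨?_, trivial⟩, ?_⟩
        · show F ζ p.1 = F η p.1
          rw [← hpe, ← hpe']
        · show E1.symm (Sum.inl (p.1, F ζ p.1, p.2.2)) = x
          rw [← hpe]
          have : (p.1, p.2.1, p.2.2) = p := rfl
          rw [this, ← hp, Equiv.symm_apply_apply]
      · exact absurd (hp.symm.trans hq') (by simp)
    · rcases side_ne_none η (E1 x) hη' with ⟨p', hp', _⟩ | ⟨q', hq', hqe'⟩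
      · exact absurd (hq.symm.trans hp') (by simp)
      · have hqq' : q = q' := Sum.inr.inj (hq.symm.trans hq')
        subst hqq'
        refine ⟨(q.1, Sum.inr q.2.2), ⟨?_, trivial⟩, ?_⟩
        · show F ζ q.1 = F η q.1
          rw [← hqe, ← hqe']
        · show E1.symm (Sum.inr (q.1, F ζ q.1, q.2.2)) = x
          rw [← hqe]
          have : (q.1, q.2.1, q.2.2) = q := rfl
          rw [this, ← hq, Equiv.symm_apply_apply]
  refine Set.Countable.mono hsub ?_
  exact Set.Countable.image ((AgrC ζ η hζ hη hne).prod (Set.countable_univ)) _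

lemma mem_A_inr (ζ : Ordinal) (β i : W) (n : ℕ) :
    E1.symm (Sum.inr (β, i, n)) ∈ Aset ζ ↔ (i = F ζ β ∧ sigma (F' ζ β) n = false) := by
  show sideOf ζ (E1 (E1.symm (Sum.inr (β, i, n)))) = some false ↔ _
  rw [Equiv.apply_symm_apply]
  show (if i = F ζ β then some (sigma (F' ζ β) n) else none) = some false ↔ _
  by_cases h : i = F ζ β
  · rw [if_pos h]
    simp [h]
  · rw [if_neg h]
    simp [h]

lemma mem_B_inr (ζ : Ordinal) (β i : W) (n : ℕ) :
    E1.symm (Sum.inr (β, i, n)) ∈ Bset ζ ↔ (i = F ζ β ∧ sigma (F' ζ β) n = true) := by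
  show sideOf ζ (E1 (E1.symm (Sum.inr (β, i, n)))) = some true ↔ _
  rw [Equiv.apply_symm_apply]
  show (if i = F ζ β then some (sigma (F' ζ β) n) else none) = some true ↔ _
  by_cases h : i = F ζ β
  · rw [if_pos h]
    simp [h]
  · rw [if_neg h]
    simp [h]

lemma mem_union_inr (ζ : Ordinal) (β i : W) (n : ℕ)
    (h : E1.symm (Sum.inr (β, i, n)) ∈ Aset ζ ∪ Bset ζ) : i = F ζ β := by
  rcases h with h | h
  · exact ((mem_A_inr ζ β i n).mp h).1
  · exact ((mem_B_inr ζ β i n).mp h).1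



lemma aleph0_le_aleph1' : (ℵ₀ : Cardinal.{1}) ≤ ℵ₁ := le_of_lt (aleph0_lt_aleph_one)

lemma le_aleph1_of_lt_aleph2 {u : Cardinal.{0}} (h : u < aleph 2) : u ≤ aleph 1 := by
  have h2 : (2 : Ordinal) = Order.succ 1 := by norm_num
  rw [h2, Cardinal.aleph_succ] at h
  exact Order.lt_succ_iff.mp h

lemma le_aleph1_of_lt_aleph2' {u : Cardinal.{1}} (h : u < aleph 2) : u ≤ aleph 1 := by
  have h2 : (2 : Ordinal) = Order.succ 1 := by norm_num
  rw [h2, Cardinal.aleph_succ] at h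
  exact Order.lt_succ_iff.mp h

lemma aleph1_lt_aleph2 : (aleph 1 : Cardinal.{1}) < aleph 2 :=
  Cardinal.aleph_lt_aleph.mpr (by norm_num)

/-- cardinality of a `≤`-initial segment of `J` is at most `ℵ₁`. -/
lemma mkJle (a : Ordinal) (ha : a < (aleph 2).ord) :
    #{ζ : J | ζ.1 ≤ a} ≤ (aleph 1 : Cardinal.{1}) := by
  have hsucc : a + 1 < (aleph 2).ord := by
    have hlim : Order.IsSuccLimit ((aleph 2).ord) := Cardinal.isSuccLimit_ord (by
      rw [← Cardinal.aleph_zero]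
      exact Cardinal.aleph_le_aleph.mpr (by norm_num))
    rw [Ordinal.add_one_eq_succ]
    exact hlim.succ_lt ha
  have e : {ζ : J | ζ.1 ≤ a} ↪ {o : Ordinal // o < a + 1} := by
    refine ⟨fun x => ⟨x.1.1, ?_⟩, ?_⟩
    · have := x.2
      simp only [Set.mem_setOf_eq] at this
      rw [Ordinal.add_one_eq_succ, Order.lt_succ_iff]
      exact this
    · intro x y hxy
      have h' : x.1.1 = y.1.1 := congrArg (fun z : {o : Ordinal // o < a + 1} => z.1) hxy
      exact Subtype.ext (Subtype.ext h')
  have h1 : #{ζ : J | ζ.1 ≤ a} ≤ #{o : Ordinal // o < a + 1} := Cardinal.mk_le_of_injective e.2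
  have h2 : #{o : Ordinal // o < a + 1} = Cardinal.lift.{1} (a+1).card := by
    have : #{o : Ordinal // o < a + 1} = #(Set.Iio (a+1)) :=
      Cardinal.mk_congr (Equiv.subtypeEquivRight (fun _ => Iff.rfl))
    rw [this, Ordinal.mk_Iio_ordinal]
  refine h1.trans ?_
  rw [h2]
  have h3 : (a+1).card ≤ aleph 1 := le_aleph1_of_lt_aleph2 (Cardinal.lt_ord.mp hsucc)
  calc Cardinal.lift.{1} (a+1).card ≤ Cardinal.lift.{1} (aleph 1) := Cardinal.lift_le.mpr h3
    _ = aleph 1 := by rw [Cardinal.lift_aleph]; norm_num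

theorem mainG (G : J → Set J) (hG : ∀ ξ, (G ξ).Countable) :
    ∃ ξ η : J, ξ ≠ η ∧
      ((Aset ξ.1 ∩ Bset η.1) \ ⋃ ζ ∈ (G ξ \ {ξ}) ∪ (G η \ {η}), (Aset ζ.1 ∪ Bset ζ.1)).Nonempty := by
  classical
  -- dirt sets and their bounds
  set Dirt : J → Set W := fun ζ => ⋃ g ∈ (G ζ \ {ζ}), {β : W | F ζ.1 β = F g.1 β} with hDirt
  have hDirtC : ∀ ζ, (Dirt ζ).Countable := by
    intro ζ
    refine Set.Countable.biUnion ((hG ζ).mono Set.diff_subset) ?_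
    intro g hg
    have hgne : g ≠ ζ := by
      intro hEq
      rw [hEq] at hg
      exact hg.2 rfl
    exact AgrC ζ.1 g.1 ζ.2 g.2 (fun h => hgne (Subtype.ext h).symm)
  have hbE : ∀ ζ : J, ∃ b : W, ∀ x ∈ Dirt ζ, x < b := fun ζ => exists_strict_bound (hDirtC ζ)
  set b : J → W := fun ζ => (hbE ζ).choose with hb
  have hbspec : ∀ ζ : J, ∀ x ∈ Dirt ζ, x < b ζ := fun ζ => (hbE ζ).choose_spec
  -- pigeonhole: a level set of size > ℵ₁
  have hlev : ∃ βst : W, ¬ (#{ζ : J | b ζ ≤ βst} ≤ (aleph 1 : Cardinal.{1})) := by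
    by_contra hall
    push_neg at hall
    have hcov : (Set.univ : Set J) = ⋃ βst : W, {ζ : J | b ζ ≤ βst} := by
      apply Set.eq_of_subset_of_subset
      · intro ζ _
        exact Set.mem_iUnion.mpr ⟨b ζ, show b ζ ≤ b ζ from le_rfl⟩
      · intro _ _; trivial
    have h1 : #J ≤ (aleph 1 : Cardinal.{1}) := by
      calc #J = #(Set.univ : Set J) := mk_univ.symm
        _ = #(⋃ βst : W, {ζ : J | b ζ ≤ βst}) := by rw [hcov]
        _ ≤ #W * ⨆ βst : W, #{ζ : J | b ζ ≤ βst} := Cardinal.mk_iUnion_le _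
        _ ≤ (aleph 1) * (aleph 1) := by
            refine mul_le_mul' (le_of_eq mkW) (ciSup_le' hall)
        _ = aleph 1 := Cardinal.mul_eq_self aleph0_le_aleph1'
    rw [mkJ] at h1
    exact absurd h1 (not_le.mpr aleph1_lt_aleph2)
  obtain ⟨βst, hZbig⟩ := hlev
  set Z : Set J := {ζ : J | b ζ ≤ βst} with hZ
  have hZlt : (aleph 1 : Cardinal.{1}) < #Z := not_le.mp hZbig
  -- embedding of W into Z
  have hjE : Nonempty (W ↪ ↥Z) := by
    rw [← Cardinal.le_def, mkW]
    exact hZlt.le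
  set j : W ↪ ↥Z := Classical.choice hjE with hj
  set jJ : W → J := fun k => ((j k : ↥Z) : J) with hjJ
  have hjJinj : Function.Injective jJ := fun a c hac => j.injective (Subtype.ext hac)
  have hjJZ : ∀ k, jJ k ∈ Z := fun k => (j k).2
  -- the sets L and U to avoid
  set L : Set J := ⋃ k : W, {ζ : J | ζ.1 ≤ (jJ k).1} with hL
  set U : Set J := ⋃ k : W, G (jJ k) with hU
  have hLle : #L ≤ (aleph 1 : Cardinal.{1}) := by
    calc #L ≤ #W * ⨆ k : W, #{ζ : J | ζ.1 ≤ (jJ k).1} := Cardinal.mk_iUnion_le _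
      _ ≤ (aleph 1) * (aleph 1) :=
          mul_le_mul' (le_of_eq mkW) (ciSup_le' (fun k => mkJle (jJ k).1 (jJ k).2))
      _ = aleph 1 := Cardinal.mul_eq_self aleph0_le_aleph1'
  have hUle : #U ≤ (aleph 1 : Cardinal.{1}) := by
    calc #U ≤ #W * ⨆ k : W, #(G (jJ k)) := Cardinal.mk_iUnion_le _
      _ ≤ (aleph 1) * (aleph 1) := by
          refine mul_le_mul' (le_of_eq mkW) (ciSup_le' (fun k => ?_))
          exact le_trans ((hG (jJ k)).le_aleph0) aleph0_le_aleph1'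
      _ = aleph 1 := Cardinal.mul_eq_self aleph0_le_aleph1'
  -- pick ζ' ∈ Z avoiding L ∪ U
  have hzeta : ∃ ζ' : J, ζ' ∈ Z ∧ ζ' ∉ L ∪ U := by
    by_contra hno
    push_neg at hno
    have hsub : Z ⊆ L ∪ U := fun ζ hζ => hno ζ hζ
    have : #Z ≤ (aleph 1 : Cardinal.{1}) :=
      le_trans (Cardinal.mk_le_mk_of_subset hsub)
        (le_trans (Cardinal.mk_union_le _ _)
          (by
            calc #L + #U ≤ (aleph 1) + (aleph 1) := add_le_add hLle hUle
              _ = aleph 1 := Cardinal.add_eq_left aleph0_le_aleph1' le_rfl))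
    exact absurd this hZbig
  obtain ⟨ζ', hζ'Z, hζ'LU⟩ := hzeta
  have hζ'L : ∀ k : W, (jJ k).1 < ζ'.1 := by
    intro k
    by_contra hle
    push_neg at hle
    exact hζ'LU (Or.inl (Set.mem_iUnion.mpr ⟨k, hle⟩))
  have hζ'U : ∀ k : W, ζ' ∉ G (jJ k) := by
    intro k hmem
    exact hζ'LU (Or.inr (Set.mem_iUnion.mpr ⟨k, hmem⟩))
  -- ζ' has ℵ₁-many predecessors
  have hbig : Nonempty (W ≃ PredT ζ'.1) := by
    apply equiv_of_card
    have hle : (ζ'.1).card ≤ aleph 1 := le_aleph1_of_lt_aleph2 (Cardinal.lt_ord.mp ζ'.2)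
    have hge : aleph 1 ≤ (ζ'.1).card := by
      have hemb : Function.Injective (fun k : W => (⟨(jJ k).1, hζ'L k⟩ : PredT ζ'.1)) := by
        intro a c hac
        have h' : (jJ a).1 = (jJ c).1 := congrArg (fun z : PredT ζ'.1 => z.1) hac
        exact hjJinj (Subtype.ext h')
      have h1 : #W ≤ #(PredT ζ'.1) := Cardinal.mk_le_of_injective hemb
      rw [mkW, mkPred] at h1
      have h2 := (Cardinal.lift_le.{1}).mp (by
        calc Cardinal.lift.{1} (aleph 1 : Cardinal.{0}) = (aleph 1 : Cardinal.{1}) := by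
              rw [Cardinal.lift_aleph]; norm_num
          _ ≤ Cardinal.lift.{1} (ζ'.1).card := h1)
      exact h2
    exact le_antisymm hle hge
  -- the uncountable target set T of predecessor ordinals
  set T : Set Ordinal := {ξ : Ordinal | ∃ k : W, (jJ k).1 = ξ ∧ jJ k ∉ G ζ'} with hT
  have hTsub : ∀ ξ ∈ T, ξ < ζ'.1 := by
    rintro ξ ⟨k, hk, _⟩
    rw [← hk]
    exact hζ'L k
  have hTunc : ¬ T.Countable := by
    intro hTc
    set K : Set W := {k : W | jJ k ∈ G ζ'} with hK
    have hKc : K.Countable := by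
      have : K = jJ ⁻¹' (G ζ') := rfl
      rw [this]
      exact (hG ζ').preimage hjJinj
    have hKcompl : ((Set.univ : Set W) \ K).Countable := by
      have hsub2 : (Set.univ : Set W) \ K ⊆ (fun k : W => (jJ k).1) ⁻¹' T := by
        intro k hk
        exact ⟨k, rfl, hk.2⟩
      refine Set.Countable.mono hsub2 ?_
      refine hTc.preimage ?_
      intro a c hac
      exact hjJinj (Subtype.ext hac)
    have : (Set.univ : Set W).Countable := by
      have heq : (Set.univ : Set W) = ((Set.univ : Set W) \ K) ∪ K :=
        (Set.diff_union_of_subset (Set.subset_univ K)).symm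
      rw [heq]
      exact hKcompl.union hKc
    rw [countable_iff_lt_aleph_one, mk_univ, mkW] at this
    exact lt_irrefl _ this
  -- apply the conflict lemma
  obtain ⟨ξ₀, hξ₀T, β, hβgt, hFeq, hF'ne⟩ := L_conflict ζ'.1 ζ'.2 hbig T hTsub hTunc βst
  obtain ⟨k₀, hk₀eq, hk₀G⟩ := hξ₀T
  set ξJ : J := jJ k₀ with hxiJ
  have hξJval : ξJ.1 = ξ₀ := hk₀eq
  have hξJZ : ξJ ∈ Z := hjJZ k₀
  have hξJne : ξJ ≠ ζ' := by
    intro hEq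
    have := hζ'L k₀
    rw [← hxiJ, hEq] at this
    exact lt_irrefl _ this
  have hζ'notinGξ : ζ' ∉ G ξJ := hζ'U k₀
  have hξnotinGζ' : ξJ ∉ G ζ' := hk₀G
  -- bounds
  have hbζ' : b ζ' ≤ βst := hζ'Z
  have hbξ : b ξJ ≤ βst := hξJZ
  -- the bit where the two sides differ
  have hsigne : sigma (F' ζ'.1 β) ≠ sigma (F' ξ₀ β) := fun h => hF'ne (sigma_inj h)
  obtain ⟨n, hn⟩ := Function.ne_iff.mp hsigne
  set i : W := F ζ'.1 β with hi
  set x : W := E1.symm (Sum.inr (β, i, n)) with hx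
  -- avoidance of all pairs indexed by the G-sets
  have havoid : ∀ g : J, (g ∈ G ζ' \ {ζ'} ∨ g ∈ G ξJ \ {ξJ}) → x ∉ Aset g.1 ∪ Bset g.1 := by
    intro g hg hxg
    have hgF : i = F g.1 β := mem_union_inr g.1 β i n hxg
    rcases hg with ⟨hgG, hgne⟩ | ⟨hgG, hgne⟩
    · -- g ∈ G ζ' \ {ζ'}
      have hgneζ : g ≠ ζ' := fun h => hgne (by simp [h])
      have hdirt : β ∈ Dirt ζ' := by
        refine Set.mem_biUnion (⟨hgG, fun h => hgneζ (by simpa using h)⟩ : g ∈ G ζ' \ {ζ'}) ?_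
        show F ζ'.1 β = F g.1 β
        rw [← hi]
        exact hgF
      have := hbspec ζ' β hdirt
      exact absurd hβgt (not_lt.mpr (le_of_lt (lt_of_lt_of_le this hbζ')))
    · -- g ∈ G ξJ \ {ξJ}
      have hgneξ : g ≠ ξJ := fun h => hgne (by simp [h])
      have hdirt : β ∈ Dirt ξJ := by
        refine Set.mem_biUnion (⟨hgG, fun h => hgneξ (by simpa using h)⟩ : g ∈ G ξJ \ {ξJ}) ?_
        show F ξJ.1 β = F g.1 β
        rw [hξJval, ← hFeq]
        exact hgF
      have := hbspec ξJ β hdirt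
      exact absurd hβgt (not_lt.mpr (le_of_lt (lt_of_lt_of_le this hbξ)))
  -- two cases according to the bit of ζ'
  rcases hbool : sigma (F' ζ'.1 β) n with _ | _
  · -- false: x ∈ Aset ζ' ∩ Bset ξJ
    refine ⟨ζ', ξJ, fun h => hξJne h.symm, x, ⟨?_, ?_⟩, ?_⟩
    · exact (mem_A_inr ζ'.1 β i n).mpr ⟨hi, hbool⟩
    · refine (mem_B_inr ξJ.1 β i n).mpr ⟨?_, ?_⟩
      · rw [hξJval]
        exact hFeq
      · rw [hξJval]
        rcases hbool2 : sigma (F' ξ₀ β) n with _ | _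
        · rw [hbool, hbool2] at hn; exact absurd rfl hn
        · rfl
    · intro hmem
      simp only [Set.mem_iUnion] at hmem
      obtain ⟨g, hgmem, hxg⟩ := hmem
      rcases hgmem with hgmem | hgmem
      · exact havoid g (Or.inl hgmem) hxg
      · exact havoid g (Or.inr hgmem) hxg
  · -- true: x ∈ Aset ξJ ∩ Bset ζ'
    refine ⟨ξJ, ζ', hξJne, x, ⟨?_, ?_⟩, ?_⟩
    · refine (mem_A_inr ξJ.1 β i n).mpr ⟨?_, ?_⟩
      · rw [hξJval]
        exact hFeq
      · rw [hξJval]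
        rcases hbool2 : sigma (F' ξ₀ β) n with _ | _
        · rfl
        · rw [hbool, hbool2] at hn; exact absurd rfl hn
    · exact (mem_B_inr ζ'.1 β i n).mpr ⟨hi, hbool⟩
    · intro hmem
      simp only [Set.mem_iUnion] at hmem
      obtain ⟨g, hgmem, hxg⟩ := hmem
      rcases hgmem with hgmem | hgmem
      · exact havoid g (Or.inr hgmem) hxg
      · exact havoid g (Or.inl hgmem) hxg


end Stmt19Aux

section Transport

universe v w

open Stmt19Aux

lemma mkW_u : #({o : Ordinal.{v} // o < (aleph 1).ord}) = aleph 1 := by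
  have h0 : #({o : Ordinal.{v} // o < (aleph 1).ord}) = #(Set.Iio ((aleph 1 : Cardinal.{v}).ord)) :=
    Cardinal.mk_congr (Equiv.subtypeEquivRight (fun _ => Iff.rfl))
  rw [h0, Ordinal.mk_Iio_ordinal, Cardinal.card_ord, Cardinal.lift_aleph]
  norm_num

lemma mkJ_u : #({o : Ordinal.{w} // o < (aleph 2).ord}) = aleph 2 := by
  have h0 : #({o : Ordinal.{w} // o < (aleph 2).ord}) = #(Set.Iio ((aleph 2 : Cardinal.{w}).ord)) :=
    Cardinal.mk_congr (Equiv.subtypeEquivRight (fun _ => Iff.rfl))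
  rw [h0, Ordinal.mk_Iio_ordinal, Cardinal.card_ord, Cardinal.lift_aleph]
  norm_num

lemma eW_exists : Nonempty ({o : Ordinal.{v} // o < (aleph 1).ord} ≃ W) := by
  rw [← Cardinal.lift_mk_eq']
  rw [mkW_u, mkW, Cardinal.lift_aleph, Cardinal.lift_aleph]
  norm_num

lemma eJ_exists : Nonempty ({o : Ordinal.{w} // o < (aleph 2).ord} ≃ J) := by
  rw [← Cardinal.lift_mk_eq']
  rw [mkJ_u, mkJ, Cardinal.lift_aleph, Cardinal.lift_aleph]
  norm_num

end Transport

/-- There is a family `{(A_ξ, B_ξ) : ξ < ω₂}` of pairs of disjoint uncountable subsets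
of `ω₁`, with `(A_ξ ∪ B_ξ) ∩ (A_η ∪ B_η)` countable for `ξ ≠ η`, such that for every
`G : ω₂ → [ω₂]^{≤ω}` there are distinct `ξ, η` with
`(A_ξ ∩ B_η) \ ⋃ {A_ζ ∪ B_ζ : ζ ∈ (G ξ \ {ξ}) ∪ (G η \ {η})}` nonempty. -/
theorem stmt_19 :
    ∃ A B : {o : Ordinal // o < (aleph 2).ord} → Set {o : Ordinal // o < (aleph 1).ord},
      (∀ ξ, Disjoint (A ξ) (B ξ)) ∧
      (∀ ξ, ¬ (A ξ).Countable ∧ ¬ (B ξ).Countable) ∧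
      (∀ ξ η, ξ ≠ η → ((A ξ ∪ B ξ) ∩ (A η ∪ B η)).Countable) ∧
      (∀ G : {o : Ordinal // o < (aleph 2).ord} → Set {o : Ordinal // o < (aleph 2).ord},
        (∀ ξ, (G ξ).Countable) →
        ∃ ξ η, ξ ≠ η ∧
          ((A ξ ∩ B η) \ ⋃ ζ ∈ (G ξ \ {ξ}) ∪ (G η \ {η}), (A ζ ∪ B ζ)).Nonempty) := by
  classical
  obtain ⟨eW⟩ := eW_exists
  obtain ⟨eJ⟩ := eJ_exists
  refine ⟨fun ξ => eW ⁻¹' (Stmt19Aux.Aset (eJ ξ).1), fun ξ => eW ⁻¹' (Stmt19Aux.Bset (eJ ξ).1),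
    ?_, ?_, ?_, ?_⟩
  · intro ξ
    exact (Stmt19Aux.disjointAB (eJ ξ).1).preimage _
  · intro ξ
    constructor
    · intro hc
      apply Stmt19Aux.uncountableA (eJ ξ).1
      have himg := hc.image eW
      have : eW '' (eW ⁻¹' (Stmt19Aux.Aset (eJ ξ).1)) = Stmt19Aux.Aset (eJ ξ).1 :=
        Set.image_preimage_eq _ eW.surjective
      rwa [this] at himg
    · intro hc
      apply Stmt19Aux.uncountableB (eJ ξ).1
      have himg := hc.image eW
      have : eW '' (eW ⁻¹' (Stmt19Aux.Bset (eJ ξ).1)) = Stmt19Aux.Bset (eJ ξ).1 :=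
        Set.image_preimage_eq _ eW.surjective
      rwa [this] at himg
  · intro ξ η hne
    have hne' : ((eJ ξ).1 : Ordinal) ≠ (eJ η).1 := by
      intro h
      exact hne (eJ.injective (Subtype.ext h))
    have hcnt := Stmt19Aux.pairwiseAB (eJ ξ).1 (eJ η).1 (eJ ξ).2 (eJ η).2 hne'
    have heq : (eW ⁻¹' (Stmt19Aux.Aset (eJ ξ).1) ∪ eW ⁻¹' (Stmt19Aux.Bset (eJ ξ).1)) ∩
        (eW ⁻¹' (Stmt19Aux.Aset (eJ η).1) ∪ eW ⁻¹' (Stmt19Aux.Bset (eJ η).1)) =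
        eW ⁻¹' ((Stmt19Aux.Aset (eJ ξ).1 ∪ Stmt19Aux.Bset (eJ ξ).1) ∩
          (Stmt19Aux.Aset (eJ η).1 ∪ Stmt19Aux.Bset (eJ η).1)) := by
      simp [Set.preimage_inter, Set.preimage_union]
    rw [heq]
    exact hcnt.preimage eW.injective
  · intro G hG
    set G0 : Stmt19Aux.J → Set Stmt19Aux.J := fun ζ => eJ '' (G (eJ.symm ζ)) with hG0
    have hG0c : ∀ ζ, (G0 ζ).Countable := fun ζ => (hG _).image _
    obtain ⟨ξ0, η0, hne0, x0, ⟨hxA, hxB⟩, hxU⟩ := Stmt19Aux.mainG G0 hG0c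
    refine ⟨eJ.symm ξ0, eJ.symm η0, ?_, eW.symm x0, ⟨?_, ?_⟩, ?_⟩
    · intro h
      exact hne0 (by rw [← eJ.apply_symm_apply ξ0, ← eJ.apply_symm_apply η0, h])
    · show eW (eW.symm x0) ∈ Stmt19Aux.Aset (eJ (eJ.symm ξ0)).1
      rw [eJ.apply_symm_apply, eW.apply_symm_apply]
      exact hxA
    · show eW (eW.symm x0) ∈ Stmt19Aux.Bset (eJ (eJ.symm η0)).1
      rw [eJ.apply_symm_apply, eW.apply_symm_apply]
      exact hxB
    · intro hmem
      apply hxU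
      simp only [Set.mem_iUnion] at hmem ⊢
      obtain ⟨ζ, hζmem, hxζ⟩ := hmem
      refine ⟨eJ ζ, ?_, ?_⟩
      · rcases hζmem with ⟨h1, h2⟩ | ⟨h1, h2⟩
        · left
          refine ⟨⟨ζ, h1, rfl⟩, ?_⟩
          · intro hbad
            apply h2
            have : ζ = eJ.symm ξ0 := by
              have := Set.eq_of_mem_singleton hbad
              rw [← this, eJ.symm_apply_apply]
            simp [this]
        · right
          refine ⟨⟨ζ, h1, rfl⟩, ?_⟩
          · intro hbad
            apply h2
            have : ζ = eJ.symm η0 := by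
              have := Set.eq_of_mem_singleton hbad
              rw [← this, eJ.symm_apply_apply]
            simp [this]
      · rcases hxζ with hxζ | hxζ
        · left
          have : eW (eW.symm x0) ∈ Stmt19Aux.Aset (eJ ζ).1 := hxζ
          rwa [eW.apply_symm_apply] at this
        · right
          have : eW (eW.symm x0) ∈ Stmt19Aux.Bset (eJ ζ).1 := hxζ
          rwa [eW.apply_symm_apply] at this

end
end
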